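/- arXiv:2011.09866 — 3 statements merged into one kernel-verified Lean document; each statement's English description precedes it below -/
import Mathlib

section
/- There exists a class ℒ of recursive languages such that ℒ ∈ [TxtTdEx_W]_REC but ℒ ∉ [TxtGEx_C]_REC; that is, some partial computable transductive learner Ex_W-learns every member of ℒ, but no partial computable Gold-style (full-information) learner Ex_C-learns every member of ℒ. -/
namespace InductiveInference

/-- `φ_e` : the `e`-th partial computable function, via the standard numbering
of `Nat.Partrec.Code`. -/
def phi (e : ℕ) : ℕ →. ℕ := (Denumerable.ofNat Nat.Partrec.Code e).eval

/-- `W_e` : the domain of `φ_e`. -/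
def Wset (e : ℕ) : Set ℕ := (phi e).Dom

/-- `e` is a C-index: `φ_e` is total with values in `{0,1}`. -/
def CIndex (e : ℕ) : Prop := ∀ x, phi e x = Part.some 0 ∨ phi e x = Part.some 1

/-- `C_e = {x | φ_e x = 1}`. -/
def Cset (e : ℕ) : Set ℕ := {x | phi e x = Part.some 1}

/-- A language is recursive (decidable). -/
def RecLang (L : Set ℕ) : Prop := ∃ f : ℕ → Bool, Computable f ∧ ∀ x, x ∈ L ↔ f x = true

/-- Texts: total functions `ℕ → ℕ ∪ {#}`; `none` is the pause symbol `#`. -/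
abbrev Text := ℕ → Option ℕ

/-- The content of a text: its range minus the pause symbol. -/
def content (T : Text) : Set ℕ := {x | ∃ n, T n = some x}

/-- The initial segment `T[n] = (T 0, …, T (n-1))`. -/
def initSeg (T : Text) (n : ℕ) : List (Option ℕ) := (List.range n).map T

/-- The (finite) content of the initial segment `T[n]`. -/
def fincontent (T : Text) (n : ℕ) : Finset ℕ := ((initSeg T n).filterMap id).toFinset

/-- A canonical numerical code for a finite set of naturals. -/
def setCode (D : Finset ℕ) : ℕ := Encodable.encode (D.sort (· ≤ ·))

/-- Learners: partial functions on (suitably coded) natural number inputs. -/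
abbrev Learner := ℕ →. ℕ

/-- The learner is partial computable. -/
def PartComputable (h : Learner) : Prop := Nat.Partrec h

/-- The learner is total computable. -/
def TotalComputable (h : Learner) : Prop := Nat.Partrec h ∧ ∀ x, (h x).Dom

/-- Hypothesis sequences (possibly undefined at some points). -/
abbrev HypSeq := ℕ → Part ℕ

/-- Gold-style (full-information) learning: `G(h,T)(i) = h(T[i])`. -/
def Gop (h : Learner) (T : Text) (i : ℕ) : Part ℕ :=
  h (Encodable.encode (initSeg T i))

/-- Partially set-driven learning: `Psd(h,T)(i) = h(content T[i], i)`. -/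
def Psdop (h : Learner) (T : Text) (i : ℕ) : Part ℕ :=
  h (Nat.pair (setCode (fincontent T i)) i)

/-- Set-driven learning: `Sd(h,T)(i) = h(content T[i])`. -/
def Sdop (h : Learner) (T : Text) (i : ℕ) : Part ℕ :=
  h (setCode (fincontent T i))

/-- Iterative learning: the input `none` codes the empty start sequence `ε`,
and `some (e, x)` codes the pair of previous hypothesis `e` and datum `x`. -/
def Itop (h : Learner) (T : Text) : ℕ → Part ℕ
  | 0 => h (Encodable.encode (none : Option (ℕ × Option ℕ)))
  | i + 1 => (Itop h T i).bind fun e =>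
      h (Encodable.encode (some (e, T i) : Option (ℕ × Option ℕ)))

/-- Transductive learning: the learner receives the single (coded) datum
`T i`; the output `0` codes the distinguished symbol `?`, and the output
`e + 1` codes the hypothesis `e`.  The value `?` of the hypothesis sequence
is represented by `Part.none`. -/
def Tdop (h : Learner) (T : Text) : ℕ → Part ℕ
  | 0 => Part.none
  | i + 1 => (h (Encodable.encode (T i))).bind fun v =>
      match v with
      | 0 => Tdop h T i
      | e + 1 => Part.some e

/-- `Ex_C`: syntactic convergence to a single correct C-index. -/
def ExC (p : HypSeq) (T : Text) : Prop :=
  ∃ n₀, (∀ n, n₀ ≤ n → p n = p n₀) ∧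
    ∃ e, p n₀ = Part.some e ∧ CIndex e ∧ Cset e = content T

/-- `Ex_W`: syntactic convergence to a single correct W-index. -/
def ExW (p : HypSeq) (T : Text) : Prop :=
  ∃ n₀, (∀ n, n₀ ≤ n → p n = p n₀) ∧
    ∃ e, p n₀ = Part.some e ∧ Wset e = content T

/-- `Bc_C`: semantic convergence to correct C-indices. -/
def BcC (p : HypSeq) (T : Text) : Prop :=
  ∃ n₀, ∀ n, n₀ ≤ n → ∃ e, p n = Part.some e ∧ CIndex e ∧ Cset e = content T

/-- `Bc_W`: semantic convergence to correct W-indices. -/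
def BcW (p : HypSeq) (T : Text) : Prop :=
  ∃ n₀, ∀ n, n₀ ≤ n → ∃ e, p n = Part.some e ∧ Wset e = content T

/-- `CInd`: every hypothesis output is a C-index. -/
def CIndRes (p : HypSeq) (_T : Text) : Prop :=
  ∀ i e, p i = Part.some e → CIndex e

/-- `T`: the always-true restriction. -/
def TrueRes (_p : HypSeq) (_T : Text) : Prop := True

abbrev InteractionOp := Learner → Text → HypSeq
abbrev Restriction := HypSeq → Text → Prop

/-- Conjunction of restrictions. -/
def andRes (δ δ' : Restriction) : Restriction := fun p T => δ p T ∧ δ' p T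

/-- `h` `Txtβδ`-learns `L`: on every text for `L` the restriction `δ` holds. -/
def Learns (β : InteractionOp) (δ : Restriction) (h : Learner) (L : Set ℕ) : Prop :=
  ∀ T : Text, content T = L → δ (β h T) T

/-- The restriction `α` holds for `h` on all texts whatsoever. -/
def OnAllTexts (β : InteractionOp) (α : Restriction) (h : Learner) : Prop :=
  ∀ T : Text, α (β h T) T

/-- A class of recursive languages. -/
def IsRecClass (ℒ : Set (Set ℕ)) : Prop := ∀ L ∈ ℒ, RecLang L

/-- `[𝒞Txtβδ]_REC`: classes of recursive languages learnable by some
learner from `C` under interaction operator `β` and restriction `δ`. -/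
def LearnableREC (C : Learner → Prop) (β : InteractionOp) (δ : Restriction) :
    Set (Set (Set ℕ)) :=
  {ℒ | IsRecClass ℒ ∧ ∃ h, C h ∧ ∀ L ∈ ℒ, Learns β δ h L}

/-- `[τ(α)𝒞Txtβδ]_REC`: as above, where additionally `α` must hold on
arbitrary texts. -/
def TauLearnableREC (C : Learner → Prop) (α : Restriction) (β : InteractionOp)
    (δ : Restriction) : Set (Set (Set ℕ)) :=
  {ℒ | IsRecClass ℒ ∧ ∃ h, C h ∧ OnAllTexts β α h ∧ ∀ L ∈ ℒ, Learns β δ h L}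

/-!
`lang i` is the content of a text built in stages against the Gold-style learner `φ_i`; its
data are `⟨i, 0⟩` and fillers `⟨i, k + 1⟩`. Stage `k`, having built `σ`, searches for a padding
`d` such that `φ_i(σ #^d)` is some `e` and `φ_e` halts on the filler `⟨i, k + 1⟩` with a value
`v`; it then appends `#^d` and, if `v = 0`, the filler. Suppose `φ_i` converged on this text to a
C-index `e` of `lang i` from `n₀` on. No stage can stall: the text would be `σ #^ω`, on which `φ_i`
outputs `e`, and `φ_e` rejects the filler, so the search succeeds. Hence stage `n₀` runs, and `φ_e`
misclassifies its filler.

Each `lang i` is recursive: finite if a stage stalls, and otherwise `y` is decided at stage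
`y + 1`. Every datum of `lang i` names `i`, and `⟨i, 0⟩ ∈ lang i`, so mapping each datum `⟨i, m⟩`
to a fixed W-index of `lang i` is a transductive learner for all of them.
-/

namespace Separation

open Nat.Partrec (Code)
open Nat.Partrec.Code Encodable Denumerable

def special (i : ℕ) : ℕ := Nat.pair i 0

def filler (i m : ℕ) : ℕ := Nat.pair i (m + 1)

abbrev Seg := List (Option ℕ)

def padded (σ : Seg) (d : ℕ) : Seg := σ ++ List.replicate d none

/-- `u` codes a step bound `t` and a padding length `d`: run `φ_i` on `σ #^d` for `t` steps,
then run its output on the filler of stage `k` for `t` steps. -/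
def probe (i k : ℕ) (σ : Seg) (u : ℕ) : Option ℕ :=
  (evaln u.unpair.1 (ofNat Code i) (encode (padded σ u.unpair.2))).bind fun e =>
    evaln u.unpair.1 (ofNat Code e) (filler i k)

def extend (i k : ℕ) (σ : Seg) (d v : ℕ) : Seg :=
  padded σ d ++ [if v = 0 then some (filler i k) else none]

def stage (i k : ℕ) (σ : Seg) : Part Seg :=
  Nat.rfindOpt fun u => (probe i k σ u).map (extend i k σ u.unpair.2)

def seg (i : ℕ) : ℕ → Part Seg
  | 0 => Part.some [some (special i)]
  | k + 1 => (seg i k).bind (stage i k)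

lemma primrec_padded : Primrec₂ padded := by
  have hrep : Primrec fun d : ℕ => List.replicate d (none : Option ℕ) :=
    (Primrec.list_map Primrec.list_range (Primrec.const none).to₂).of_eq
      fun d => by simp [List.map_const']
  exact Primrec.list_append.comp Primrec.fst (hrep.comp Primrec.snd)

lemma primrec_filler : Primrec₂ filler :=
  Primrec₂.natPair.comp Primrec.fst (Primrec.succ.comp Primrec.snd)

lemma primrec_probe :
    Primrec fun p : (ℕ × ℕ × Seg) × ℕ => probe p.1.1 p.1.2.1 p.1.2.2 p.2 := by
  have run : Primrec fun q : ℕ × ℕ × ℕ => evaln q.1 (ofNat Code q.2.1) q.2.2 :=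
    primrec_evaln.comp ((Primrec.fst.pair ((Primrec.ofNat Code).comp
      (Primrec.fst.comp Primrec.snd))).pair (Primrec.snd.comp Primrec.snd))
  have bound : Primrec fun p : (ℕ × ℕ × Seg) × ℕ => p.2.unpair.1 :=
    Primrec.fst.comp (Primrec.unpair.comp Primrec.snd)
  refine Primrec.option_bind
    (run.comp (bound.pair ((Primrec.fst.comp Primrec.fst).pair (Primrec.encode.comp
      (primrec_padded.comp (Primrec.snd.comp (Primrec.snd.comp Primrec.fst))
        (Primrec.snd.comp (Primrec.unpair.comp Primrec.snd)))))))
    (run.comp ((bound.comp Primrec.fst).pair (Primrec.snd.pair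
      (primrec_filler.comp (Primrec.fst.comp (Primrec.fst.comp Primrec.fst))
        (Primrec.fst.comp (Primrec.snd.comp (Primrec.fst.comp Primrec.fst))))))).to₂

lemma primrec_extend :
    Primrec fun p : (ℕ × ℕ × Seg) × ℕ × ℕ =>
      extend p.1.1 p.1.2.1 p.1.2.2 p.2.1 p.2.2 := by
  have last : Primrec fun p : (ℕ × ℕ × Seg) × ℕ × ℕ =>
      if p.2.2 = 0 then some (filler p.1.1 p.1.2.1) else none :=
    Primrec.ite (Primrec.eq.comp (Primrec.snd.comp Primrec.snd) (Primrec.const 0))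
      (Primrec.option_some.comp (primrec_filler.comp (Primrec.fst.comp Primrec.fst)
        (Primrec.fst.comp (Primrec.snd.comp Primrec.fst))))
      (Primrec.const none)
  exact Primrec.list_append.comp
    (primrec_padded.comp (Primrec.snd.comp (Primrec.snd.comp Primrec.fst))
      (Primrec.fst.comp Primrec.snd))
    (Primrec.list_cons.comp last (Primrec.const []))

lemma partrec_stage : Partrec fun q : ℕ × ℕ × Seg => stage q.1 q.2.1 q.2.2 := by
  have step : Primrec fun p : (ℕ × ℕ × Seg) × ℕ =>
      (probe p.1.1 p.1.2.1 p.1.2.2 p.2).map (extend p.1.1 p.1.2.1 p.1.2.2 p.2.unpair.2) :=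
    Primrec.option_map primrec_probe
      (primrec_extend.comp ((Primrec.fst.comp Primrec.fst).pair
        ((Primrec.snd.comp (Primrec.unpair.comp (Primrec.snd.comp Primrec.fst))).pair
          Primrec.snd))).to₂
  exact Partrec.rfindOpt step.to_comp

lemma partrec_seg : Partrec fun q : ℕ × ℕ => seg q.1 q.2 := by
  have hinit : Computable fun i : ℕ => [some (special i)] :=
    (Primrec.list_cons.comp (Primrec.option_some.comp
      (Primrec₂.natPair.comp Primrec.id (Primrec.const 0))) (Primrec.const [])).to_comp
  have hstep : Partrec₂ fun (q : ℕ × ℕ) (p : ℕ × Seg) => stage q.1 p.1 p.2 :=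
    (partrec_stage.comp ((Computable.fst.comp Computable.fst).pair
      ((Computable.fst.comp Computable.snd).pair (Computable.snd.comp Computable.snd)))).to₂
  refine (Partrec.nat_rec Computable.snd (hinit.comp Computable.fst).partrec hstep).of_eq ?_
  rintro ⟨i, k⟩
  induction k with
  | zero => rfl
  | succ k ih =>
    show _ = seg i (k + 1)
    rw [seg, ← ih]
    rfl

lemma computable₂_some_mem : Computable₂ fun (y : ℕ) (σ : Seg) => decide (some y ∈ σ) :=
  ((Primrec.nat_lt.comp (Primrec.list_idxOf.comp (Primrec.option_some.comp Primrec.fst)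
    Primrec.snd) (Primrec.list_length.comp Primrec.snd)).decide.of_eq
    fun p => by simp [List.idxOf_lt_length_iff]).to_comp

section Structure

variable {i k k' d m v y : ℕ} {σ σ' : Seg}

lemma mem_seg_zero : [some (special i)] ∈ seg i 0 := Part.mem_some _

lemma mem_seg_succ : σ' ∈ seg i (k + 1) ↔ ∃ σ ∈ seg i k, σ' ∈ stage i k σ := by
  simp [seg, Part.mem_bind_iff]

lemma exists_of_mem_stage (h : σ' ∈ stage i k σ) :
    ∃ d e v, e ∈ phi i (encode (padded σ d)) ∧ v ∈ phi e (filler i k) ∧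
      σ' = extend i k σ d v := by
  obtain ⟨u, hu⟩ := Nat.rfindOpt_spec h
  obtain ⟨v, hv, rfl⟩ := Option.map_eq_some_iff.1 hu
  obtain ⟨e, he, hv⟩ := Option.bind_eq_some_iff.1 hv
  exact ⟨_, e, v, evaln_sound he, evaln_sound hv, rfl⟩

lemma stage_dom_iff : (stage i k σ).Dom ↔
    ∃ d e v, e ∈ phi i (encode (padded σ d)) ∧ v ∈ phi e (filler i k) := by
  refine ⟨fun h => ?_, fun ⟨d, e, v, he, hv⟩ => ?_⟩
  · obtain ⟨d, e, v, he, hv, -⟩ := exists_of_mem_stage (Part.get_mem h)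
    exact ⟨d, e, v, he, hv⟩
  · obtain ⟨t₁, ht₁⟩ := evaln_complete.1 he
    obtain ⟨t₂, ht₂⟩ := evaln_complete.1 hv
    refine Nat.rfindOpt_dom.2 ⟨Nat.pair (max t₁ t₂) d, extend i k σ d v, ?_⟩
    simp only [probe, Nat.unpair_pair, Option.mem_def, Option.map_eq_some_iff]
    refine ⟨v, ?_, rfl⟩
    rw [evaln_mono (le_max_left _ _) ht₁, Option.bind_some]
    exact evaln_mono (le_max_right _ _) ht₂

lemma prefix_extend : σ <+: extend i k σ d v :=
  (List.prefix_append _ _).trans (List.prefix_append _ _)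

lemma some_mem_extend :
    some y ∈ extend i k σ d v ↔ some y ∈ σ ∨ (v = 0 ∧ y = filler i k) := by
  by_cases hv : v = 0 <;> simp [extend, padded, hv, eq_comm]

lemma length_lt_of_mem_seg (h : σ ∈ seg i k) : k < σ.length := by
  induction k generalizing σ with
  | zero => rw [Part.mem_unique h mem_seg_zero]; simp
  | succ k ih =>
    obtain ⟨σ₀, h₀, h₁⟩ := mem_seg_succ.1 h
    obtain ⟨d, -, v, -, -, rfl⟩ := exists_of_mem_stage h₁
    have := ih h₀
    simp only [extend, padded, List.length_append, List.length_replicate,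
      List.length_singleton]
    omega

lemma seg_dom_of_le (hk : k ≤ k') (h : (seg i k').Dom) : (seg i k).Dom := by
  induction hk with
  | refl => exact h
  | step _ ih =>
    obtain ⟨σ, hσ⟩ := Part.dom_iff_mem.1 h
    obtain ⟨σ₀, h₀, -⟩ := mem_seg_succ.1 hσ
    exact ih (Part.dom_iff_mem.2 ⟨σ₀, h₀⟩)

lemma prefix_of_mem_seg (h : σ ∈ seg i k) (h' : σ' ∈ seg i k') (hk : k ≤ k') :
    σ <+: σ' := by
  induction hk generalizing σ' with
  | refl => rw [Part.mem_unique h h']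
  | step _ ih =>
    obtain ⟨σ₀, h₀, h₁⟩ := mem_seg_succ.1 h'
    obtain ⟨d, -, v, -, -, rfl⟩ := exists_of_mem_stage h₁
    exact (ih h₀).trans prefix_extend

lemma mem_seg_of_le (h : σ ∈ seg i k) (h' : σ' ∈ seg i k') (hk : k ≤ k')
    (hy : some y ∈ σ') :
    some y ∈ σ ∨ ∃ m, k ≤ m ∧ m < k' ∧ y = filler i m := by
  induction hk generalizing σ' with
  | refl => exact Or.inl (Part.mem_unique h' h ▸ hy)
  | @step k' hk ih =>
    obtain ⟨σ₀, h₀, h₁⟩ := mem_seg_succ.1 h'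
    obtain ⟨d, -, v, -, -, rfl⟩ := exists_of_mem_stage h₁
    rcases some_mem_extend.1 hy with hy | ⟨-, rfl⟩
    · rcases ih h₀ hy with hy | ⟨m, hkm, hm, rfl⟩
      · exact Or.inl hy
      · exact Or.inr ⟨m, hkm, by omega, rfl⟩
    · exact Or.inr ⟨k', hk, by omega, rfl⟩

lemma eq_special_or_filler (h : σ ∈ seg i k) (hy : some y ∈ σ) :
    y = special i ∨ ∃ m < k, y = filler i m := by
  rcases mem_seg_of_le mem_seg_zero h (Nat.zero_le k) hy with hy | ⟨m, -, hm, rfl⟩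
  · exact Or.inl (by simpa using hy)
  · exact Or.inr ⟨m, hm, rfl⟩

lemma filler_injective : Function.Injective (filler i) := fun m m' h => by
  simpa [filler] using congrArg (·.unpair.2) h

lemma filler_ne_special : filler i m ≠ special i := by simp [filler, special]

lemma filler_not_mem_seg (h : σ ∈ seg i k) : some (filler i k) ∉ σ := fun hk => by
  rcases eq_special_or_filler h hk with h | ⟨m, hm, h⟩
  · exact filler_ne_special h
  · exact hm.ne' (filler_injective h)

lemma seg_dom_or_stall (i : ℕ) :
    (∀ k, (seg i k).Dom) ∨ ∃ k, ∃ σ ∈ seg i k, ¬(stage i k σ).Dom := by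
  refine or_iff_not_imp_right.2 fun hstall k => ?_
  induction k with
  | zero => exact trivial
  | succ k ih =>
    by_contra hk
    exact hstall ⟨k, _, Part.get_mem ih, fun hs => hk ⟨ih, hs⟩⟩

lemma prefix_of_stall (hσ : σ ∈ seg i k) (hs : ¬(stage i k σ).Dom) (h' : σ' ∈ seg i k') :
    σ' <+: σ := by
  refine prefix_of_mem_seg h' hσ (not_lt.1 fun hk => hs ?_)
  obtain ⟨_, hstage⟩ := seg_dom_of_le hk (Part.dom_iff_mem.2 ⟨σ', h'⟩)
  simpa only [Part.get_eq_of_mem hσ] using hstage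

end Structure

open Classical in
/-- The union of the segments, continued by pauses after a stage that never ends. -/
noncomputable def text (i : ℕ) : Text := fun n =>
  if h : ∃ p : ℕ × Seg, p.2 ∈ seg i p.1 ∧ n < p.2.length
  then (Classical.choose h).2[n]'(Classical.choose_spec h).2 else none

def lang (i : ℕ) : Set ℕ := content (text i)

section Text

variable {i k n y : ℕ} {σ τ : Seg}

lemma text_eq_getElem (h : σ ∈ seg i k) (hn : n < σ.length) : text i n = σ[n] := by
  have hex : ∃ p : ℕ × Seg, p.2 ∈ seg i p.1 ∧ n < p.2.length := ⟨(k, σ), h, hn⟩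
  obtain ⟨hmem, hlen⟩ := Classical.choose_spec hex
  rw [text, dif_pos hex]
  rcases le_total (Classical.choose hex).1 k with hk | hk
  · exact (prefix_of_mem_seg hmem h hk).getElem hlen
  · exact ((prefix_of_mem_seg h hmem hk).getElem hn).symm

lemma initSeg_text_of_prefix (h : σ ∈ seg i k) (hτ : τ <+: σ) :
    initSeg (text i) τ.length = τ := by
  refine List.ext_getElem (by simp [initSeg]) fun m hm _ => ?_
  have hmσ : m < σ.length := (by simpa [initSeg] using hm : m < τ.length).trans_le hτ.length_le
  simp only [initSeg, List.getElem_map, List.getElem_range]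
  rw [text_eq_getElem h hmσ, hτ.getElem]

lemma mem_lang_iff : y ∈ lang i ↔ ∃ k, ∃ σ ∈ seg i k, some y ∈ σ := by
  constructor
  · rintro ⟨n, hn⟩
    by_cases hex : ∃ p : ℕ × Seg, p.2 ∈ seg i p.1 ∧ n < p.2.length
    · rw [text, dif_pos hex] at hn
      exact ⟨_, _, (Classical.choose_spec hex).1, hn ▸ List.getElem_mem _⟩
    · simp [text, dif_neg hex] at hn
  · rintro ⟨k, σ, hσ, hy⟩
    obtain ⟨n, hn, hget⟩ := List.getElem_of_mem hy
    exact ⟨n, by rw [text_eq_getElem hσ hn, hget]⟩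

lemma special_mem_lang : special i ∈ lang i :=
  mem_lang_iff.2 ⟨0, _, mem_seg_zero, List.mem_singleton_self _⟩

lemma unpair_fst_of_mem_lang (hy : y ∈ lang i) : y.unpair.1 = i := by
  obtain ⟨k, σ, hσ, hy⟩ := mem_lang_iff.1 hy
  rcases eq_special_or_filler hσ hy with rfl | ⟨m, -, rfl⟩ <;> simp [special, filler]

lemma mem_lang_iff_mem_seg (hσ : σ ∈ seg i k) (hy : ∀ m, y = filler i m → m < k) :
    y ∈ lang i ↔ some y ∈ σ := by
  refine ⟨fun h => ?_, fun h => mem_lang_iff.2 ⟨k, σ, hσ, h⟩⟩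
  obtain ⟨k', σ', hσ', hy'⟩ := mem_lang_iff.1 h
  rcases le_total k' k with hk | hk
  · exact (prefix_of_mem_seg hσ' hσ hk).subset hy'
  · rcases mem_seg_of_le hσ hσ' hk hy' with hy' | ⟨m, hkm, -, rfl⟩
    · exact hy'
    · exact absurd (hy m rfl) hkm.not_gt

lemma lang_eq_of_stall (hσ : σ ∈ seg i k) (hs : ¬(stage i k σ).Dom) :
    lang i = {y | some y ∈ σ} := by
  ext y
  refine mem_lang_iff.trans ⟨fun ⟨k', σ', hσ', hy⟩ => ?_, fun hy => ⟨k, σ, hσ, hy⟩⟩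
  exact (prefix_of_stall hσ hs hσ').subset hy

lemma initSeg_text_of_stall (hσ : σ ∈ seg i k) (hs : ¬(stage i k σ).Dom) (d : ℕ) :
    initSeg (text i) (σ.length + d) = padded σ d := by
  have hnone : ∀ n, σ.length ≤ n → text i n = none := fun n hn => by
    rw [text, dif_neg]
    rintro ⟨⟨k', σ'⟩, hσ', hlt⟩
    exact (hlt.trans_le ((prefix_of_stall hσ hs hσ').length_le)).not_ge hn
  refine List.ext_getElem (by simp [initSeg, padded]) fun m hm _ => ?_
  simp only [initSeg, List.getElem_map, List.getElem_range, padded, List.getElem_append]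
  split_ifs with hmσ
  · exact text_eq_getElem hσ hmσ
  · simp [hnone m (not_lt.1 hmσ)]

end Text

lemma recLang_lang (i : ℕ) : RecLang (lang i) := by
  rcases seg_dom_or_stall i with hdom | ⟨k, σ, hσ, hs⟩
  · refine ⟨fun y => decide (some y ∈ (seg i (y + 1)).get (hdom (y + 1))), ?_, fun y => ?_⟩
    · refine Partrec.of_eq_tot
        ((partrec_seg.comp ((Computable.const i).pair Computable.succ)).map
          (computable₂_some_mem.comp Computable.fst Computable.snd).to₂) fun y => ?_
      exact Part.mem_map _ (Part.get_mem (hdom (y + 1)))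
    · rw [mem_lang_iff_mem_seg (Part.get_mem (hdom _)), decide_eq_true_iff]
      rintro m rfl
      have := Nat.right_le_pair i (m + 1)
      rw [filler]
      omega
  · exact ⟨fun y => decide (some y ∈ σ), computable₂_some_mem.comp Computable.id
      (Computable.const σ), fun y => by simp [lang_eq_of_stall hσ hs]⟩

def enum : ℕ →. ℕ := fun z =>
  Nat.rfind fun k => (seg z.unpair.1 k).map fun σ => decide (some z.unpair.2 ∈ σ)

lemma partrec_enum : Nat.Partrec enum :=
  Partrec.nat_iff.1 <| Partrec.rfind <|
    ((partrec_seg.comp ((Computable.fst.comp (Computable.unpair.comp Computable.fst)).pair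
      Computable.snd)).map
    (computable₂_some_mem.comp (Computable.snd.comp (Computable.unpair.comp
      (Computable.fst.comp Computable.fst))) Computable.snd).to₂).to₂

lemma enum_dom_iff {i y : ℕ} : (enum (Nat.pair i y)).Dom ↔ y ∈ lang i := by
  simp only [enum, Nat.unpair_pair]
  refine Nat.rfind_dom.trans ?_
  rw [mem_lang_iff]
  constructor
  · rintro ⟨k, hk, -⟩
    obtain ⟨σ, hσ, hy⟩ := (Part.mem_map_iff _).1 hk
    exact ⟨k, σ, hσ, of_decide_eq_true hy⟩
  · rintro ⟨k, σ, hσ, hy⟩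
    exact ⟨k, (Part.mem_map_iff _).2 ⟨σ, hσ, decide_eq_true hy⟩,
      fun hm => seg_dom_of_le hm.le (Part.dom_iff_mem.2 ⟨σ, hσ⟩)⟩

lemma phi_encode (c : Code) : phi (encode c) = c.eval := by
  rw [phi, ofNat_encode]

noncomputable def enumCode : Code := (exists_code.1 partrec_enum).choose

lemma eval_enumCode : enumCode.eval = enum := (exists_code.1 partrec_enum).choose_spec

noncomputable def wIndex (i : ℕ) : ℕ := encode (enumCode.curry i)

lemma wset_wIndex (i : ℕ) : Wset (wIndex i) = lang i := by
  ext y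
  change (phi (wIndex i) y).Dom ↔ _
  rw [wIndex, phi_encode, eval_curry, eval_enumCode, enum_dom_iff]

/-- `encode` codes a pause as `0` and a datum `y` as `y + 1`. -/
noncomputable def tdOut : ℕ → ℕ
  | 0 => 0
  | y + 1 => wIndex y.unpair.1 + 1

noncomputable def tdLearner : Learner := fun d => Part.some (tdOut d)

lemma partComputable_tdLearner : PartComputable tdLearner := by
  have hw : Primrec wIndex :=
    Primrec.encode.comp (primrec₂_curry.comp (Primrec.const enumCode) Primrec.id)
  have hout : Primrec tdOut :=
    (Primrec.nat_casesOn Primrec.id (Primrec.const 0) (Primrec.succ.comp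
      (hw.comp (Primrec.fst.comp (Primrec.unpair.comp Primrec.snd)))).to₂).of_eq
        fun d => by cases d <;> rfl
  exact Partrec.nat_iff.1 hout.to_comp.partrec

lemma tdop_tdLearner_succ (T : Text) (n : ℕ) :
    Tdop tdLearner T (n + 1) =
      (T n).elim (Tdop tdLearner T n) fun y => Part.some (wIndex y.unpair.1) := by
  cases h : T n <;> simp [Tdop, tdLearner, tdOut, h]

lemma learns_tdLearner (i : ℕ) : Learns Tdop ExW tdLearner (lang i) := by
  intro T hT
  obtain ⟨n₁, hn₁⟩ : special i ∈ content T := hT ▸ special_mem_lang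
  have hconst : ∀ n, Tdop tdLearner T (n₁ + 1 + n) = Part.some (wIndex i) := by
    intro n
    induction n with
    | zero => simp [tdop_tdLearner_succ, hn₁, special]
    | succ n ih =>
      rw [← add_assoc, tdop_tdLearner_succ]
      cases hTn : T (n₁ + 1 + n) with
      | none => exact ih
      | some y => simp [unpair_fst_of_mem_lang (hT ▸ ⟨_, hTn⟩ : y ∈ lang i)]
  refine ⟨n₁ + 1, fun n hn => ?_, wIndex i, hconst 0, by rw [wset_wIndex, hT]⟩
  obtain ⟨d, rfl⟩ := Nat.exists_eq_add_of_le hn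
  rw [hconst d, ← hconst 0]

lemma exists_of_exC_gop {h : Learner} {T : Text} (hex : ExC (Gop h T) T) :
    ∃ n₀ e, (∀ n, n₀ ≤ n → e ∈ h (encode (initSeg T n))) ∧
      CIndex e ∧ Cset e = content T := by
  obtain ⟨n₀, hconv, e, he, hC⟩ := hex
  refine ⟨n₀, e, fun n hn => ?_, hC⟩
  change e ∈ Gop h T n
  rw [hconv n hn, he]
  exact Part.mem_some e

lemma phi_eq_zero_of_not_mem_cset {e x : ℕ} (he : CIndex e) (hx : x ∉ Cset e) :
    phi e x = Part.some 0 :=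
  (he x).resolve_right hx

lemma filler_mem_lang_iff {i k d v : ℕ} {σ : Seg} (hσ : σ ∈ seg i k)
    (h' : extend i k σ d v ∈ seg i (k + 1)) : filler i k ∈ lang i ↔ v = 0 := by
  rw [mem_lang_iff_mem_seg h' fun m hm => Nat.lt_succ_of_le (filler_injective hm).ge,
    some_mem_extend]
  simp [filler_not_mem_seg hσ]

section Diagonalization

variable {i n₀ e : ℕ}

lemma stage_dom_of_converges
    (hconv : ∀ n, n₀ ≤ n → e ∈ phi i (encode (initSeg (text i) n)))
    (hC : CIndex e) (hCset : Cset e = lang i) {k : ℕ} {σ : Seg} (hσ : σ ∈ seg i k) :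
    (stage i k σ).Dom := by
  by_contra hs
  refine hs (stage_dom_iff.2 ⟨n₀, e, 0, ?_, ?_⟩)
  · rw [← initSeg_text_of_stall hσ hs]
    exact hconv _ (Nat.le_add_left _ _)
  · rw [phi_eq_zero_of_not_mem_cset hC]
    · exact Part.mem_some 0
    · rw [hCset, lang_eq_of_stall hσ hs]
      exact filler_not_mem_seg hσ

lemma not_mem_seg_succ_of_converges
    (hconv : ∀ n, n₀ ≤ n → e ∈ phi i (encode (initSeg (text i) n)))
    (hC : CIndex e) (hCset : Cset e = lang i) (σ' : Seg) : σ' ∉ seg i (n₀ + 1) := by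
  intro h'
  obtain ⟨σ, hσ, hstage⟩ := mem_seg_succ.1 h'
  obtain ⟨d, e', v, he', hv, rfl⟩ := exists_of_mem_stage hstage
  have hinit : initSeg (text i) (padded σ d).length = padded σ d :=
    initSeg_text_of_prefix h' (List.prefix_append _ _)
  have he : e' = e := by
    refine Part.mem_unique he' (hinit ▸ hconv _ ((length_lt_of_mem_seg hσ).le.trans ?_))
    simp [padded]
  subst he
  have hfill := filler_mem_lang_iff hσ h'
  rw [← hCset] at hfill
  by_cases hx : filler i n₀ ∈ Cset e'
  · have hv1 : v = 1 := Part.mem_some_iff.1 (hx ▸ hv)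
    exact absurd (hfill.1 hx) (by omega)
  · have hv0 : v = 0 := Part.mem_some_iff.1 (phi_eq_zero_of_not_mem_cset hC hx ▸ hv)
    exact hx (hfill.2 hv0)

end Diagonalization

lemma not_exC_gop_text (i : ℕ) : ¬ ExC (Gop (phi i) (text i)) (text i) := by
  intro hex
  obtain ⟨n₀, e, hconv, hC, hCset⟩ := exists_of_exC_gop hex
  have hdom : ∀ k, (seg i k).Dom := by
    intro k
    induction k with
    | zero => trivial
    | succ k ih => exact ⟨ih, stage_dom_of_converges hconv hC hCset (Part.get_mem ih)⟩
  exact not_mem_seg_succ_of_converges hconv hC hCset _ (Part.get_mem (hdom (n₀ + 1)))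

end Separation

/-- There is a class of recursive languages `Ex_W`-learnable by a transductive
learner but `Ex_C`-learnable by no Gold-style learner. -/
theorem td_exW_not_g_exC :
    ∃ ℒ : Set (Set ℕ),
      ℒ ∈ LearnableREC PartComputable Tdop ExW ∧
      ℒ ∉ LearnableREC PartComputable Gop ExC := by
  refine ⟨Set.range Separation.lang,
    ⟨?_, Separation.tdLearner, Separation.partComputable_tdLearner, ?_⟩, ?_⟩
  · rintro _ ⟨i, rfl⟩
    exact Separation.recLang_lang i
  · rintro _ ⟨i, rfl⟩
    exact Separation.learns_tdLearner i
  · rintro ⟨-, h, hh, hlearn⟩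
    obtain ⟨c, rfl⟩ := Nat.Partrec.Code.exists_code.1 hh
    rw [← Separation.phi_encode] at hlearn
    exact Separation.not_exC_gop_text _ (hlearn _ ⟨_, rfl⟩ _ rfl)

end InductiveInference
end

section
/- For each choice of δ, δ' ∈ {CInd, T} (where T denotes the always-true restriction): [τ(δ)TxtGδ'Ex_C]_REC = [τ(δ)ℛTxtPsdδ'Ex_C]_REC; that is, a class of recursive languages is τ(δ)δ'Ex_C-learnable by a partial computable Gold-style (full-information) learner if and only if it is τ(δ)δ'Ex_C-learnable by a total computable partially set-driven learner. -/
namespace InductiveInference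

/-!
A partial Gold-style learner with code `c` is first made total: on `σ`, `totalized c` conjectures
what `c` conjectures on the longest prefix of `σ` on which it halts within `σ.length` steps.
Wherever `c` converges on a text, `totalized c` converges to the same index, so by the Blum–Blum
argument it has a locking sequence for every learned `L`, and its conjecture there is correct.
Given the content `D` of the data seen so far and the time `t`, the partially set-driven learner
outputs the conjecture on the first of the first `t` sequences that consists of elements of `D`
and whose extensions among the first `t` sequences consisting of elements of `D` do not change the
conjecture. On a text for `L`, every sequence preceding the least locking sequence is eventually
refuted and that one eventually passes for good, so the learner converges to a correct index.
Each conjecture is `0`, a C-index, or a conjecture of `c` on data from the text, so the output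
restrictions `CInd` and `T` carry over. Conversely, `(content T[i], i)` is computable from `T[i]`.
-/

open Filter Encodable Denumerable
open Nat.Partrec (Code)
open Nat.Partrec.Code (eval evaln)

/-! ### Texts and finite sequences -/

def seqContent (σ : List (Option ℕ)) : Set ℕ := {x | some x ∈ σ}

lemma seqContent_mono {σ τ : List (Option ℕ)} (h : σ <+: τ) : seqContent σ ⊆ seqContent τ :=
  fun _ hx => h.subset hx

lemma mem_seqContent_append_singleton {σ : List (Option ℕ)} {o : Option ℕ} {x : ℕ} :
    x ∈ seqContent (σ ++ [o]) ↔ x ∈ seqContent σ ∨ o = some x := by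
  simp [seqContent, eq_comm]

lemma initSeg_length (T : Text) (n : ℕ) : (initSeg T n).length = n := by
  simp [initSeg]

lemma initSeg_take (T : Text) {m n : ℕ} (h : m ≤ n) : (initSeg T n).take m = initSeg T m := by
  simp [initSeg, ← List.map_take, List.take_range, Nat.min_eq_left h]

lemma initSeg_prefix (T : Text) {m n : ℕ} (h : m ≤ n) : initSeg T m <+: initSeg T n := by
  rw [← initSeg_take T h]
  exact List.take_prefix _ _

lemma initSeg_of_prefix {T : Text} {σ τ : List (Option ℕ)} (hτ : initSeg T τ.length = τ)
    (h : σ <+: τ) : initSeg T σ.length = σ := by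
  rw [← initSeg_take T h.length_le, hτ, ← List.prefix_iff_eq_take.1 h]

lemma mem_seqContent_initSeg {T : Text} {n x : ℕ} :
    x ∈ seqContent (initSeg T n) ↔ ∃ j < n, T j = some x := by
  simp [seqContent, initSeg]

lemma coe_fincontent (T : Text) (n : ℕ) : (fincontent T n : Set ℕ) = seqContent (initSeg T n) := by
  ext x
  simp [fincontent, seqContent]

lemma seqContent_initSeg_subset (T : Text) (n : ℕ) : seqContent (initSeg T n) ⊆ content T := by
  intro x hx
  obtain ⟨j, -, hj⟩ := mem_seqContent_initSeg.1 hx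
  exact ⟨j, hj⟩

lemma fincontent_subset_content (T : Text) (n : ℕ) : (fincontent T n : Set ℕ) ⊆ content T := by
  rw [coe_fincontent]
  exact seqContent_initSeg_subset T n

lemma eventually_mem_fincontent {T : Text} {x : ℕ} (hx : x ∈ content T) :
    ∀ᶠ n in atTop, x ∈ fincontent T n := by
  obtain ⟨j, hj⟩ := hx
  filter_upwards [eventually_gt_atTop j] with n hn
  rw [← Finset.mem_coe, coe_fincontent]
  exact mem_seqContent_initSeg.2 ⟨j, hn, hj⟩

lemma eventually_subset_fincontent {T : Text} {σ : List (Option ℕ)}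
    (hσ : seqContent σ ⊆ content T) : ∀ᶠ n in atTop, seqContent σ ⊆ fincontent T n := by
  have hfin : (seqContent σ).Finite :=
    (σ.reduceOption.toFinset.finite_toSet).subset fun _ hx =>
      List.mem_toFinset.2 (List.reduceOption_mem_iff.2 hx)
  filter_upwards [hfin.eventually_all.2 fun x hx => eventually_mem_fincontent (hσ hx)] with n hn
  exact hn

def extendText (σ : List (Option ℕ)) (T : Text) : Text := fun n =>
  if h : n < σ.length then σ[n] else T (n - σ.length)

lemma initSeg_extendText (σ : List (Option ℕ)) (T : Text) :
    initSeg (extendText σ T) σ.length = σ :=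
  List.ext_getElem (initSeg_length _ _) fun n _ hn => by simp [initSeg, extendText, hn]

lemma content_extendText (σ : List (Option ℕ)) (T : Text) :
    content (extendText σ T) = seqContent σ ∪ content T := by
  ext x
  constructor
  · rintro ⟨n, hn⟩
    by_cases h : n < σ.length
    · simp only [extendText, dif_pos h] at hn
      exact Or.inl (show some x ∈ σ from hn ▸ List.getElem_mem h)
    · simp only [extendText, dif_neg h] at hn
      exact Or.inr ⟨_, hn⟩
  · rintro (hx | ⟨n, hn⟩)
    · obtain ⟨n, hn, hx⟩ := List.getElem_of_mem hx
      exact ⟨n, by simp [extendText, hn, hx]⟩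
    · exact ⟨n + σ.length, by simpa [extendText] using hn⟩

open Classical in
noncomputable def textOf (L : Set ℕ) : Text := fun n => if n ∈ L then some n else none

lemma textOf_of_mem {L : Set ℕ} {n : ℕ} (h : n ∈ L) : textOf L n = some n := by
  simp [textOf, h]

lemma content_textOf (L : Set ℕ) : content (textOf L) = L := by
  ext x
  simp only [content, textOf]
  constructor
  · rintro ⟨n, hn⟩
    split_ifs at hn with h
    exact Option.some_inj.1 hn ▸ h
  · exact fun hx => ⟨x, if_pos hx⟩

lemma exists_text_initSeg {σ : List (Option ℕ)} {L : Set ℕ} (h : seqContent σ ⊆ L) :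
    ∃ T, content T = L ∧ initSeg T σ.length = σ :=
  ⟨extendText σ (textOf L), by
    rw [content_extendText, content_textOf, Set.union_eq_self_of_subset_left h],
    initSeg_extendText σ _⟩

/-! ### Locking sequences -/

lemma exists_text_initSeg_of_chain (ρ : ℕ → List (Option ℕ)) (hρ : ∀ k, ρ k <+: ρ (k + 1))
    (hlen : ∀ k, k < (ρ (k + 1)).length) : ∃ T : Text, ∀ k, initSeg T (ρ k).length = ρ k := by
  have hmono : ∀ {j k}, j ≤ k → ρ j <+: ρ k := fun hjk => by
    induction hjk with
    | refl => exact List.prefix_refl _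
    | step _ ih => exact ih.trans (hρ _)
  refine ⟨fun n => (ρ (n + 1)).getD n none, fun k => ?_⟩
  refine List.ext_getElem (initSeg_length _ _) fun n _ hn => ?_
  simp only [initSeg, List.getElem_map, List.getElem_range, List.getD_eq_getElem _ _ (hlen n)]
  rcases le_total (n + 1) k with h | h
  · exact (hmono h).getElem (hlen n)
  · exact ((hmono h).getElem hn).symm

lemma exists_text_through_extensions {L : Set ℕ} (g : List (Option ℕ) → List (Option ℕ))
    (hg : ∀ σ, seqContent σ ⊆ L → σ <+: g σ ∧ seqContent (g σ) ⊆ L) :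
    ∃ T, content T = L ∧ ∀ N, ∃ σ, N ≤ σ.length ∧ seqContent σ ⊆ L ∧
      initSeg T σ.length = σ ∧ initSeg T (g σ).length = g σ := by
  let ρ : ℕ → List (Option ℕ) := fun k => Nat.rec [] (fun k σ => g (σ ++ [textOf L k])) k
  -- appending `textOf L k` at stage `k` makes every element of `L` appear in the limit
  let σ : ℕ → List (Option ℕ) := fun k => ρ k ++ [textOf L k]
  have hρσ : ∀ k, ρ (k + 1) = g (σ k) := fun k => rfl
  have hlast : ∀ k x, textOf L k = some x → x ∈ L := fun k x hk => by
    rw [← content_textOf L]; exact ⟨k, hk⟩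
  have happend : ∀ k, seqContent (ρ k) ⊆ L → seqContent (σ k) ⊆ L := fun k h x hx =>
    (mem_seqContent_append_singleton.1 hx).elim (@h x) (hlast k x)
  have hσL : ∀ k, seqContent (σ k) ⊆ L := fun k => happend k <| by
    induction k with
    | zero => exact fun x hx => absurd hx List.not_mem_nil
    | succ k ih => exact (hg _ (happend k ih)).2
  have hstep : ∀ k, σ k <+: ρ (k + 1) := fun k => (hg _ (hσL k)).1
  have hlen : ∀ k, k < (σ k).length := by
    intro k
    induction k with
    | zero => simp [σ]
    | succ k ih =>
      have := (hstep k).length_le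
      simp only [σ, List.length_append, List.length_singleton] at ih this ⊢
      omega
  obtain ⟨T, hT⟩ := exists_text_initSeg_of_chain ρ
    (fun k => (List.prefix_append _ _).trans (hstep k))
    fun k => (hlen k).trans_le (hstep k).length_le
  have hTσ : ∀ k, initSeg T (σ k).length = σ k := fun k => initSeg_of_prefix (hT (k + 1)) (hstep k)
  refine ⟨T, ?_, fun N => ⟨σ N, (hlen N).le, hσL N, hTσ N, hρσ N ▸ hT (N + 1)⟩⟩
  apply Set.Subset.antisymm
  · rintro x ⟨n, hn⟩
    apply hσL n
    rw [← hTσ n]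
    exact mem_seqContent_initSeg.2 ⟨n, hlen n, hn⟩
  · intro x hx
    apply seqContent_initSeg_subset T (σ x).length
    rw [hTσ x]
    exact mem_seqContent_append_singleton.2 (Or.inr (textOf_of_mem hx))

section LockingSequences

variable {β : Type*} {F : List (Option ℕ) → β} {L : Set ℕ} {σ : List (Option ℕ)}

def IsLockingSeq (F : List (Option ℕ) → β) (L : Set ℕ) (σ : List (Option ℕ)) : Prop :=
  seqContent σ ⊆ L ∧ ∀ τ, σ <+: τ → seqContent τ ⊆ L → F τ = F σ

theorem exists_isLockingSeq (hF : ∀ T, content T = L → ∃ e, ∀ᶠ n in atTop, F (initSeg T n) = e) :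
    ∃ σ, IsLockingSeq F L σ := by
  by_contra! hno
  have hescape : ∀ σ, ∃ τ, seqContent σ ⊆ L → σ <+: τ ∧ seqContent τ ⊆ L ∧ F τ ≠ F σ := by
    intro σ
    by_cases hσ : seqContent σ ⊆ L
    · by_contra! h
      exact hno σ ⟨hσ, fun τ hστ hτ => (h τ).2 hστ hτ⟩
    · exact ⟨σ, fun h => absurd h hσ⟩
  choose g hg using hescape
  obtain ⟨T, hT, hthrough⟩ :=
    exists_text_through_extensions g fun σ hσ => ⟨(hg σ hσ).1, (hg σ hσ).2.1⟩
  obtain ⟨e, he⟩ := hF T hT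
  obtain ⟨N, hN⟩ := eventually_atTop.1 he
  obtain ⟨σ, hNσ, hσ, hTσ, hTgσ⟩ := hthrough N
  have hσe : F σ = e := hTσ ▸ hN _ hNσ
  have hgσe : F (g σ) = e := hTgσ ▸ hN _ (hNσ.trans (hg σ hσ).1.length_le)
  exact (hg σ hσ).2.2 (hgσe.trans hσe.symm)

theorem IsLockingSeq.of_eventually {P : β → Prop} (hσ : IsLockingSeq F L σ)
    (hP : ∀ T, content T = L → ∀ᶠ n in atTop, P (F (initSeg T n))) : P (F σ) := by
  obtain ⟨T, hT, hTσ⟩ := exists_text_initSeg hσ.1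
  obtain ⟨n, hn, hσn⟩ := ((hP T hT).and (eventually_ge_atTop σ.length)).exists
  rwa [← hσ.2 _ (hTσ ▸ initSeg_prefix T hσn) (hT ▸ seqContent_initSeg_subset T n)]

end LockingSequences

/-! ### Totalizing a Gold-style learner -/

def boundedRun (c : Code) (σ : List (Option ℕ)) (j : ℕ) : Option ℕ :=
  evaln σ.length c (encode (σ.take j))

def totalized (c : Code) (σ : List (Option ℕ)) : ℕ :=
  (boundedRun c σ (Nat.findGreatest (fun j => (boundedRun c σ j).isSome) σ.length)).getD 0

lemma totalized_eq_zero_or (c : Code) (σ : List (Option ℕ)) :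
    totalized c σ = 0 ∨ ∃ τ, τ <+: σ ∧ totalized c σ ∈ eval c (encode τ) := by
  unfold totalized
  generalize Nat.findGreatest (fun j => (boundedRun c σ j).isSome) σ.length = j
  cases h : boundedRun c σ j with
  | none => exact Or.inl rfl
  | some v => exact Or.inr ⟨σ.take j, List.take_prefix _ _, Code.evaln_sound h⟩

lemma eventually_totalized_eq {c : Code} {T : Text} {e : ℕ}
    (h : ∀ᶠ n in atTop, eval c (encode (initSeg T n)) = Part.some e) :
    ∀ᶠ n in atTop, totalized c (initSeg T n) = e := by
  obtain ⟨n₀, hn₀⟩ := eventually_atTop.1 h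
  obtain ⟨k₀, hk₀⟩ := Code.evaln_complete.1 ((hn₀ n₀ le_rfl).symm ▸ Part.mem_some e)
  filter_upwards [eventually_ge_atTop n₀, eventually_ge_atTop k₀] with n hn hk
  have hlen := initSeg_length T n
  have hn' : n₀ ≤ (initSeg T n).length := by rwa [hlen]
  have hrun : ∀ j, n₀ ≤ j → j ≤ n → ∀ v, boundedRun c (initSeg T n) j = some v → v = e :=
    fun j hj hjn v hv => by
      have := Code.evaln_sound hv
      rwa [initSeg_take T hjn, hn₀ j hj, Part.mem_some_iff] at this
  have hrun₀ : boundedRun c (initSeg T n) n₀ = some e := by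
    rw [boundedRun, initSeg_take T hn, hlen]
    exact Code.evaln_mono hk hk₀
  set J := Nat.findGreatest (fun j => (boundedRun c (initSeg T n) j).isSome) (initSeg T n).length
  have hJ : n₀ ≤ J := Nat.le_findGreatest hn' (by simp [hrun₀])
  obtain ⟨v, hv⟩ := Option.isSome_iff_exists.1 (Nat.findGreatest_spec (P := fun j =>
    (boundedRun c (initSeg T n) j).isSome) hn' (by simp [hrun₀]))
  rw [totalized, hv, hrun J hJ (hlen ▸ Nat.findGreatest_le _) v hv, Option.getD_some]

lemma primrec_boundedRun (c : Code) : Primrec₂ (boundedRun c) :=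
  Code.primrec_evaln.comp <|
    ((Primrec.list_length.comp Primrec.fst).pair (Primrec.const c)).pair
      (Primrec.encode.comp (Primrec.list_take.comp Primrec.snd Primrec.fst))

lemma primrec_totalized (c : Code) : Primrec (totalized c) := by
  have hrun := primrec_boundedRun c
  have hJ : Primrec fun σ : List (Option ℕ) =>
      Nat.findGreatest (fun j => (boundedRun c σ j).isSome) σ.length :=
    Primrec.nat_findGreatest Primrec.list_length
      (Primrec.eq.comp (Primrec.option_isSome.comp hrun) (Primrec.const true))
  exact Primrec.option_getD.comp (hrun.comp Primrec.id hJ) (Primrec.const 0)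

/-! ### A partially set-driven learner searching for locking sequences -/

lemma _root_.List.findSome?_range_eq_some {α : Type*} {f : ℕ → Option α} {j n : ℕ} {v : α}
    (hjn : j < n) (hlt : ∀ k < j, f k = none) (hj : f j = some v) :
    (List.range n).findSome? f = some v := by
  obtain ⟨m, rfl⟩ : ∃ m, n = j + 1 + m := ⟨n - (j + 1), by omega⟩
  rw [List.findSome?_eq_some_iff]
  refine ⟨List.range j, j, (List.range m).map (j + 1 + ·), ?_, hj,
    fun k hk => hlt k (List.mem_range.1 hk)⟩
  rw [List.range_add, List.range_succ, List.append_assoc, List.singleton_append]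

section LockLearner

variable (F : List (Option ℕ) → ℕ)

def IsLockingUpTo (D : Set ℕ) (t : ℕ) (σ : List (Option ℕ)) : Prop :=
  seqContent σ ⊆ D ∧ ∀ k < t, σ <+: ofNat _ k → seqContent (ofNat _ k) ⊆ D → F (ofNat _ k) = F σ

open Classical in
noncomputable def lockCandidate (D : Set ℕ) (t k : ℕ) : Option ℕ :=
  if IsLockingUpTo F D t (ofNat _ k) then some (F (ofNat _ k)) else none

noncomputable def lockLearner (D : Finset ℕ) (t : ℕ) : ℕ :=
  ((List.range t).findSome? (lockCandidate F D t)).getD 0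

variable {F}

lemma lockLearner_eq_zero_or (D : Finset ℕ) (t : ℕ) :
    lockLearner F D t = 0 ∨ ∃ σ, seqContent σ ⊆ D ∧ lockLearner F D t = F σ := by
  unfold lockLearner
  cases hfind : (List.range t).findSome? (lockCandidate F D t) with
  | none => exact Or.inl rfl
  | some v =>
    obtain ⟨k, -, hk⟩ := List.exists_of_findSome?_eq_some hfind
    simp only [lockCandidate, Option.ite_none_right_eq_some, Option.some_inj] at hk
    exact Or.inr ⟨_, hk.1.1, hk.2.symm⟩

variable {L : Set ℕ} {T : Text} {σ : List (Option ℕ)}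

lemma IsLockingSeq.eventually_isLockingUpTo (hσ : IsLockingSeq F L σ) (hT : content T = L) :
    ∀ᶠ i in atTop, IsLockingUpTo F (fincontent T i) i σ := by
  filter_upwards [eventually_subset_fincontent (hT ▸ hσ.1)] with i hi
  exact ⟨hi, fun k _ hσk hk => hσ.2 _ hσk (hk.trans (hT ▸ fincontent_subset_content T i))⟩

lemma eventually_not_isLockingUpTo (hσ : ¬ IsLockingSeq F L σ) (hT : content T = L) :
    ∀ᶠ i in atTop, ¬ IsLockingUpTo F (fincontent T i) i σ := by
  by_cases hσL : seqContent σ ⊆ L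
  · obtain ⟨τ, hστ, hτL, hne⟩ : ∃ τ, σ <+: τ ∧ seqContent τ ⊆ L ∧ F τ ≠ F σ := by
      by_contra! h
      exact hσ ⟨hσL, h⟩
    filter_upwards [eventually_gt_atTop (encode τ), eventually_subset_fincontent (hT ▸ hτL)]
      with i hi hτi
    exact fun h => hne (by simpa using h.2 (encode τ) hi (by simpa) (by simpa))
  · exact Eventually.of_forall fun i h => hσL (h.1.trans (hT ▸ fincontent_subset_content T i))

theorem eventually_lockLearner_eq
    (hF : ∀ T', content T' = L → ∃ e, ∀ᶠ n in atTop, F (initSeg T' n) = e) (hT : content T = L) :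
    ∃ σ, IsLockingSeq F L σ ∧ ∀ᶠ i in atTop, lockLearner F (fincontent T i) i = F σ := by
  classical
  have hex : ∃ k, IsLockingSeq F L (ofNat _ k) :=
    let ⟨σ, hσ⟩ := exists_isLockingSeq hF
    ⟨encode σ, by rwa [ofNat_encode]⟩
  refine ⟨_, Nat.find_spec hex, ?_⟩
  have hbefore : ∀ᶠ i in atTop,
      ∀ k ∈ Finset.range (Nat.find hex), lockCandidate F (fincontent T i) i k = none := by
    refine (eventually_all_finset _).2 fun k hk => ?_
    filter_upwards [eventually_not_isLockingUpTo (Nat.find_min hex (Finset.mem_range.1 hk)) hT]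
      with i hi
    simp [lockCandidate, hi]
  filter_upwards [hbefore, (Nat.find_spec hex).eventually_isLockingUpTo hT,
    eventually_gt_atTop (Nat.find hex)] with i hi hlock hlt
  rw [lockLearner, List.findSome?_range_eq_some hlt (fun k hk => hi k (Finset.mem_range.2 hk))
    (by rw [lockCandidate, if_pos hlock]), Option.getD_some]

end LockLearner

section Primrec

open Primrec

lemma primrecRel_isPrefix : PrimrecRel fun σ τ : List (Option ℕ) => σ <+: τ :=
  (Primrec.eq.comp fst (list_take.comp (list_length.comp fst) snd)).of_eq fun _ =>
    List.prefix_iff_eq_take.symm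

lemma primrecRel_mem : PrimrecRel fun (x : ℕ) (l : List ℕ) => x ∈ l :=
  (PrimrecRel.exists_mem_list Primrec.eq).swap.of_eq fun _ _ => by simp [Function.swap]

lemma primrecRel_seqContent_subset :
    PrimrecRel fun (D : List ℕ) (σ : List (Option ℕ)) => seqContent σ ⊆ {x | x ∈ D} :=
  (primrecRel_mem.forall_mem_list.comp ((listFilterMap Primrec.id snd.to₂).comp snd) fst).of_eq
    fun _ => by simp [Set.subset_def, seqContent]

variable {F : List (Option ℕ) → ℕ}

lemma primrecPred_isLockingUpTo (hF : Primrec F) :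
    PrimrecPred fun q : (List ℕ × ℕ) × List (Option ℕ) =>
      IsLockingUpTo F q.1.1.toFinset q.1.2 q.2 := by
  have hτ : Primrec fun x : ℕ × (List ℕ × ℕ) × List (Option ℕ) => ofNat (List (Option ℕ)) x.1 :=
    (Primrec.ofNat _).comp fst
  have hstep : PrimrecRel fun (k : ℕ) (q : (List ℕ × ℕ) × List (Option ℕ)) =>
      ¬ q.2 <+: ofNat _ k ∨ ¬ seqContent (ofNat _ k) ⊆ {x | x ∈ q.1.1} ∨ F (ofNat _ k) = F q.2 :=
    (primrecRel_isPrefix.comp (snd.comp snd) hτ).not.or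
      ((primrecRel_seqContent_subset.comp (fst.comp (fst.comp snd)) hτ).not.or
        (Primrec.eq.comp (hF.comp hτ) (hF.comp (snd.comp snd))))
  refine ((primrecRel_seqContent_subset.comp (fst.comp fst) snd).and
    (hstep.forall_mem_list.comp (list_range.comp (snd.comp fst)) Primrec.id)).of_eq fun q => ?_
  simp only [IsLockingUpTo, List.coe_toFinset, List.mem_range, imp_iff_not_or, id]

lemma primrec_lockLearner (hF : Primrec F) :
    Primrec fun p : List ℕ × ℕ => lockLearner F p.1.toFinset p.2 := by
  classical
  have hcand : Primrec₂ fun (p : List ℕ × ℕ) (k : ℕ) => lockCandidate F p.1.toFinset p.2 k :=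
    Primrec.ite ((primrecPred_isLockingUpTo hF).comp (fst.pair ((Primrec.ofNat _).comp snd)))
      (option_some.comp (hF.comp ((Primrec.ofNat _).comp snd))) (const none)
  exact (option_getD.comp (list_head?.comp (listFilterMap (list_range.comp snd) hcand))
    (const 0)).of_eq fun p => by simp only [lockLearner, List.head?_filterMap]

end Primrec

noncomputable def psdLearner (c : Code) : Learner := fun m =>
  Part.some (lockLearner (totalized c) ((decode (α := List ℕ) m.unpair.1).getD []).toFinset
    m.unpair.2)

lemma psdop_psdLearner (c : Code) (T : Text) (i : ℕ) :
    Psdop (psdLearner c) T i = Part.some (lockLearner (totalized c) (fincontent T i) i) := by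
  simp [Psdop, psdLearner, setCode, Finset.sort_toFinset]

lemma totalComputable_psdLearner (c : Code) : TotalComputable (psdLearner c) := by
  open Primrec in
  refine ⟨Partrec.nat_iff.1 (Computable.partrec ?_), fun _ => trivial⟩
  exact ((primrec_lockLearner (primrec_totalized c)).comp
    ((option_getD.comp (Primrec.decode.comp (fst.comp unpair)) (const [])).pair
      (snd.comp unpair))).to_comp

lemma psdLearner_output {c : Code} {T : Text} {i v : ℕ}
    (h : Psdop (psdLearner c) T i = Part.some v) :
    v = 0 ∨ ∃ σ, seqContent σ ⊆ content T ∧ v ∈ eval c (encode σ) := by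
  rw [psdop_psdLearner, Part.some_inj] at h
  subst h
  rcases lockLearner_eq_zero_or (fincontent T i) i with h | ⟨σ, hσ, h⟩
  · exact Or.inl h
  rw [h]
  rcases totalized_eq_zero_or c σ with h' | ⟨τ, hτσ, hτ⟩
  · exact Or.inl h'
  · exact Or.inr ⟨τ, (seqContent_mono hτσ).trans (hσ.trans (fincontent_subset_content T i)), hτ⟩

lemma cIndex_zero : CIndex 0 := by
  have h0 : ofNat Code 0 = Code.zero := by
    rw [← ofNat_encode Code.zero]
    rfl
  exact fun _ => Or.inl (by rw [phi, h0]; rfl)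

lemma exists_output_predicate {δ : Restriction} (hδ : δ = CIndRes ∨ δ = TrueRes) :
    ∃ P : ℕ → Prop, P 0 ∧ ∀ p T, δ p T ↔ ∀ i e, p i = Part.some e → P e := by
  rcases hδ with rfl | rfl
  · exact ⟨CIndex, cIndex_zero, fun _ _ => Iff.rfl⟩
  · exact ⟨fun _ => True, trivial, fun _ _ => by simp [TrueRes]⟩

lemma output_prop_of_gop {h : Learner} {L : Set ℕ} {P : ℕ → Prop}
    (hG : ∀ T, content T = L → ∀ i e, Gop h T i = Part.some e → P e)
    {σ : List (Option ℕ)} (hσ : seqContent σ ⊆ L) {v : ℕ} (hv : v ∈ h (encode σ)) : P v := by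
  obtain ⟨T, hT, hTσ⟩ := exists_text_initSeg hσ
  exact hG T hT σ.length v (by rw [Gop, hTσ]; exact Part.eq_some_iff.2 hv)

lemma psdLearner_restriction {δ : Restriction} (hδ : δ = CIndRes ∨ δ = TrueRes) {c : Code}
    {T : Text} (hG : ∀ T', content T' = content T → δ (Gop (eval c) T') T') :
    δ (Psdop (psdLearner c) T) T := by
  obtain ⟨P, hP0, hδP⟩ := exists_output_predicate hδ
  rw [hδP]
  intro i v hv
  rcases psdLearner_output hv with rfl | ⟨σ, hσ, hv⟩
  · exact hP0
  · exact output_prop_of_gop (fun T' hT' => (hδP _ _).1 (hG T' hT')) hσ hv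

lemma exC_iff_eventually {p : HypSeq} {T : Text} :
    ExC p T ↔ ∃ e, (CIndex e ∧ Cset e = content T) ∧ ∀ᶠ n in atTop, p n = Part.some e := by
  constructor
  · rintro ⟨n₀, hstable, e, he, hci, hcs⟩
    exact ⟨e, ⟨hci, hcs⟩, eventually_atTop.2 ⟨n₀, fun n hn => (hstable n hn).trans he⟩⟩
  · rintro ⟨e, ⟨hci, hcs⟩, hev⟩
    obtain ⟨n₀, hn₀⟩ := eventually_atTop.1 hev
    exact ⟨n₀, fun n hn => (hn₀ n hn).trans (hn₀ n₀ le_rfl).symm, e, hn₀ n₀ le_rfl, hci, hcs⟩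

lemma exC_psdLearner {c : Code} {L : Set ℕ} {T : Text}
    (hG : ∀ T', content T' = L → ExC (Gop (eval c) T') T') (hT : content T = L) :
    ExC (Psdop (psdLearner c) T) T := by
  have hconv : ∀ T', content T' = L →
      ∃ e, (CIndex e ∧ Cset e = L) ∧ ∀ᶠ n in atTop, totalized c (initSeg T' n) = e := by
    intro T' hT'
    obtain ⟨e, he, hev⟩ := exC_iff_eventually.1 (hG T' hT')
    exact ⟨e, hT' ▸ he, eventually_totalized_eq hev⟩
  obtain ⟨σ, hσ, hev⟩ :=
    eventually_lockLearner_eq (fun T' hT' => (hconv T' hT').imp fun _ he => he.2) hT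
  have hcorrect : CIndex (totalized c σ) ∧ Cset (totalized c σ) = L :=
    hσ.of_eventually fun T' hT' => by
      obtain ⟨e, he, hev⟩ := hconv T' hT'
      exact hev.mono fun n hn => by rwa [hn]
  exact exC_iff_eventually.2
    ⟨_, hT ▸ hcorrect, hev.mono fun i hi => by rw [psdop_psdLearner, hi]⟩

theorem tauLearnableREC_gop_subset_psdop {δ δ' : Restriction} (hδ : δ = CIndRes ∨ δ = TrueRes)
    (hδ' : δ' = CIndRes ∨ δ' = TrueRes) :
    TauLearnableREC PartComputable δ Gop (andRes δ' ExC) ⊆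
      TauLearnableREC TotalComputable δ Psdop (andRes δ' ExC) := by
  rintro ℒ ⟨hrec, h, hpc, hall, hlearn⟩
  obtain ⟨c, rfl⟩ := Code.exists_code.1 hpc
  exact ⟨hrec, psdLearner c, totalComputable_psdLearner c,
    fun T => psdLearner_restriction hδ fun T' _ => hall T',
    fun L hL T hT => ⟨psdLearner_restriction hδ' fun T' hT' => (hlearn L hL T' (hT'.trans hT)).1,
      exC_psdLearner (fun T' hT' => (hlearn L hL T' hT').2) hT⟩⟩

/-! ### Recoding the input of a Gold-style learner -/

/-- `l.toFinset.sort (· ≤ ·)` (see `sortedElems_eq`), in a visibly primitive recursive form. -/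
def sortedElems (l : List ℕ) : List ℕ := (List.range (l.sum + 1)).filter (· ∈ l)

lemma sortedElems_eq (l : List ℕ) : sortedElems l = l.toFinset.sort (· ≤ ·) := by
  have hnodup : (sortedElems l).Nodup := List.nodup_range.filter _
  have hsorted : (sortedElems l).Pairwise (· ≤ ·) :=
    (List.pairwise_lt_range.filter _).imp le_of_lt
  have hset : (sortedElems l).toFinset = l.toFinset := by
    ext x
    simpa [sortedElems, Nat.lt_succ_iff] using List.le_sum_of_mem
  rw [← hset, (List.toFinset_sort _ hnodup).2 hsorted]

lemma primrec_sortedElems : Primrec sortedElems := by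
  open Primrec in
  have hsum : Primrec (List.sum : List ℕ → ℕ) :=
    (list_foldr Primrec.id (const 0) (nat_add.comp (fst.comp snd) (snd.comp snd)).to₂).of_eq
      fun _ => List.sum_eq_foldr.symm
  exact (primrecRel_mem.listFilter.comp (list_range.comp (succ.comp hsum)) Primrec.id).of_eq
    fun _ => rfl

def psdInput (n : ℕ) : ℕ :=
  Nat.pair (encode (sortedElems (ofNat (List (Option ℕ)) n).reduceOption))
    (ofNat (List (Option ℕ)) n).length

lemma psdInput_encode_initSeg (T : Text) (i : ℕ) :
    psdInput (encode (initSeg T i)) = Nat.pair (setCode (fincontent T i)) i := by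
  simp [psdInput, sortedElems_eq, setCode, fincontent, initSeg_length, List.reduceOption]

lemma primrec_psdInput : Primrec psdInput := by
  open Primrec in
  exact (Primrec.encode.comp (primrec_sortedElems.comp ((listFilterMap Primrec.id snd.to₂).comp
    (Primrec.ofNat _)))).pair (list_length.comp (Primrec.ofNat _))

lemma gop_psdInput (h : Learner) (T : Text) : Gop (fun n => h (psdInput n)) T = Psdop h T :=
  funext fun i => congrArg h (psdInput_encode_initSeg T i)

theorem tauLearnableREC_psdop_subset_gop (α δ : Restriction) :
    TauLearnableREC TotalComputable α Psdop δ ⊆ TauLearnableREC PartComputable α Gop δ := by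
  rintro ℒ ⟨hrec, h, ⟨hpc, -⟩, hall, hlearn⟩
  refine ⟨hrec, fun n => h (psdInput n),
    Partrec.nat_iff.1 ((Partrec.nat_iff.2 hpc).comp primrec_psdInput.to_comp), fun T => ?_,
    fun L hL T hT => ?_⟩
  · rw [gop_psdInput]
    exact hall T
  · rw [gop_psdInput]
    exact hlearn L hL T hT

/-- For `δ, δ′ ∈ {CInd, T}`: `[τ(δ)TxtGδ′Ex_C]_REC = [τ(δ)ℛTxtPsdδ′Ex_C]_REC`. -/
theorem g_eq_total_psd (δ δ' : Restriction)
    (hδ : δ = CIndRes ∨ δ = TrueRes) (hδ' : δ' = CIndRes ∨ δ' = TrueRes) :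
    TauLearnableREC PartComputable δ Gop (andRes δ' ExC) =
      TauLearnableREC TotalComputable δ Psdop (andRes δ' ExC) := by
  exact (tauLearnableREC_gop_subset_psdop hδ hδ').antisymm (tauLearnableREC_psdop_subset_gop _ _)

end InductiveInference
end

section
/- [ℛTxtItCIndEx_C]_REC ⊊ [TxtItCIndEx_C]_REC; that is, every class of recursive languages CIndEx_C-learnable by a total computable iterative learner is CIndEx_C-learnable by a partial computable iterative learner, and there exists a class of recursive languages CIndEx_C-learnable by a partial computable iterative learner but by no total computable iterative learner. -/
/-!
Inclusion is immediate. For the separation, take the class of all `C_c` and `C_c ∪ {z}` with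
`z ∉ C_c`, for C-indices `c`, whose elements all carry the tag `c` as first coordinate. A partial
iterative learner reads `c` off the first datum, conjectures `C_c`, and on the first datum
`z ∉ C_c` switches for good to `C_c ∪ {z}`; deciding `z ∉ C_c` needs `φ_c(z)`, which diverges
when the tag is not a C-index, but such data never occur.

Against a total iterative learner `h`, the recursion theorem yields a C-index `e` such that
`x ∈ C_e` iff `x` is tagged `e` and `x = ⟨e, ⟨q, j⟩⟩` moves `h` out of the state `q`. Let `q` be the
state of `h` after a locking sequence for `C_e`. Then no `⟨e, ⟨q, j⟩⟩` moves `h`, so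
`z = ⟨e, ⟨q, 0⟩⟩ ∉ C_e`, and `h` converges to `q` both on `C_e` and on `C_e ∪ {z}`.
-/

namespace InductiveInference

open Nat.Partrec (Code)
open Encodable Denumerable

lemma phi_partrec : Partrec₂ phi :=
  Code.eval_part.comp ((Computable.ofNat Code).comp .fst) .snd

lemma phi_encode (c : Code) : phi (encode c) = c.eval := by
  simp [phi]

lemma recLang_cset {c : ℕ} (hc : CIndex c) : RecLang (Cset c) := by
  have hdom : ∀ x, (phi c x).Dom := fun x => by rcases hc x with h | h <;> simp [h]
  have hval : Computable fun x => (phi c x).get (hdom x) :=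
    (phi_partrec.comp (.const c) .id).of_eq_tot fun x => Part.get_mem _
  refine ⟨fun x => (phi c x).get (hdom x) == 1, Primrec.beq.to_comp.comp hval (.const 1), ?_⟩
  intro x
  simp [Cset, Part.eq_some_iff, Part.get_eq_iff_mem]

section Run

variable {σ : Type*} {g : σ → Option ℕ → σ} {s₀ : σ} {T : Text}

def run (g : σ → Option ℕ → σ) (s₀ : σ) (T : Text) (i : ℕ) : σ := (initSeg T i).foldl g s₀

lemma initSeg_succ (T : Text) (i : ℕ) : initSeg T (i + 1) = initSeg T i ++ [T i] := by
  simp [initSeg, List.range_succ]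

lemma run_succ (i : ℕ) : run g s₀ T (i + 1) = g (run g s₀ T i) (T i) := by
  simp [run, initSeg_succ]

lemma run_eq_of_absorbing {n : ℕ} {s : σ} (hn : run g s₀ T n = s)
    (hs : ∀ i, n ≤ i → g s (T i) = s) {m : ℕ} (hm : n ≤ m) : run g s₀ T m = s := by
  induction m, hm using Nat.le_induction with
  | base => exact hn
  | succ m hm ih => rw [run_succ, ih, hs m hm]

lemma itop_eq_run {h : Learner} (enc : σ → ℕ)
    (h₀ : h (encode (none : Option (ℕ × Option ℕ))) = Part.some (enc s₀))
    (hstep : ∀ i s, h (encode (some (enc s, T i))) = Part.some (enc (g s (T i)))) (i : ℕ) :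
    Itop h T i = Part.some (enc (run g s₀ T i)) := by
  induction i with
  | zero => exact h₀
  | succ i ih => rw [Itop, ih, Part.bind_some, hstep, run_succ]

end Run

lemma ExC.of_eventually_eq {p : HypSeq} {T : Text} {n e : ℕ}
    (hp : ∀ m, n ≤ m → p m = Part.some e) (he : CIndex e) (hC : Cset e = content T) : ExC p T :=
  ⟨n, fun m hm => (hp m hm).trans (hp n le_rfl).symm, e, hp n le_rfl, he, hC⟩

lemma ExC.cset_eq_of_eventually_eq {p : HypSeq} {T : Text} {n e : ℕ} (hex : ExC p T)
    (hp : ∀ m, n ≤ m → p m = Part.some e) : Cset e = content T := by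
  obtain ⟨n₀, hconst, e₀, he₀, -, hC⟩ := hex
  have h := (hp (max n n₀) (le_max_left _ _)).symm.trans (hconst _ (le_max_right _ _))
  rw [he₀, Part.some_inj] at h
  rwa [h]

section Texts

def genSeg (next : List (Option ℕ) → Option ℕ) : ℕ → List (Option ℕ)
  | 0 => []
  | i + 1 => genSeg next i ++ [next (genSeg next i)]

def genText (next : List (Option ℕ) → Option ℕ) : Text := fun i => next (genSeg next i)

lemma initSeg_genText (next : List (Option ℕ) → Option ℕ) (i : ℕ) :
    initSeg (genText next) i = genSeg next i := by
  induction i with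
  | zero => rfl
  | succ i ih => rw [initSeg_succ, ih, genSeg, genText]

lemma length_genSeg (next : List (Option ℕ) → Option ℕ) (i : ℕ) : (genSeg next i).length = i := by
  induction i with
  | zero => rfl
  | succ i ih => simp [genSeg, ih]

open Classical in
noncomputable def idText (L : Set ℕ) : Text := fun n => if n ∈ L then some n else none

lemma idText_mem {L : Set ℕ} {n x : ℕ} (hx : x ∈ idText L n) : x ∈ L := by
  by_cases hn : n ∈ L <;> simp_all [idText]

lemma idText_self {L : Set ℕ} {x : ℕ} (hx : x ∈ L) : idText L x = some x := by
  simp [idText, hx]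

def prepend (τ : List (Option ℕ)) (U : Text) : Text := fun i =>
  if h : i < τ.length then τ[i] else U (i - τ.length)

lemma initSeg_prepend (τ : List (Option ℕ)) (U : Text) : initSeg (prepend τ U) τ.length = τ := by
  apply List.ext_getElem <;> simp +contextual [initSeg, prepend]

lemma prepend_of_le {τ : List (Option ℕ)} {i : ℕ} (U : Text) (hi : τ.length ≤ i) :
    prepend τ U i = U (i - τ.length) := by
  simp [prepend, hi]

lemma content_prepend_idText {τ : List (Option ℕ)} {L : Set ℕ} (hτ : ∀ d ∈ τ, ∀ x ∈ d, x ∈ L) :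
    content (prepend τ (idText L)) = L := by
  ext x
  refine ⟨fun ⟨i, hi⟩ => ?_, fun hx => ⟨τ.length + x, ?_⟩⟩
  · by_cases hlt : i < τ.length
    · simp only [prepend, hlt, dite_true] at hi
      exact hτ _ (List.getElem_mem hlt) x hi
    · rw [prepend_of_le _ (not_lt.1 hlt)] at hi
      exact idText_mem hi
  · rw [prepend_of_le _ (Nat.le_add_right _ _), Nat.add_sub_cancel_left, idText_self hx]

end Texts

/-- The locking-sequence lemma of Blum and Blum, for deterministic iterative processes. -/
lemma exists_locking_seq {σ : Type*} {g : σ → Option ℕ → σ} {s₀ : σ} {L : Set ℕ}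
    (hconv : ∀ T : Text, content T = L → ∃ n, ∀ m, n ≤ m → run g s₀ T m = run g s₀ T n) :
    ∃ τ : List (Option ℕ), (∀ d ∈ τ, ∀ x ∈ d, x ∈ L) ∧
      ∀ d : Option ℕ, (∀ x ∈ d, x ∈ L) → g (τ.foldl g s₀) d = τ.foldl g s₀ := by
  by_contra! hno
  have hmove (τ : List (Option ℕ)) : ∃ d : Option ℕ, (∀ x ∈ d, x ∈ L) ∧
      ((∀ d ∈ τ, ∀ x ∈ d, x ∈ L) → g (τ.foldl g s₀) d ≠ τ.foldl g s₀) := by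
    by_cases hτ : ∀ d ∈ τ, ∀ x ∈ d, x ∈ L
    · obtain ⟨d, hd, hne⟩ := hno τ hτ
      exact ⟨d, hd, fun _ => hne⟩
    · exact ⟨none, by simp, fun h => absurd h hτ⟩
  choose D hDL hDmove using hmove
  -- even positions enumerate `L`, odd positions move the state
  let next (τ : List (Option ℕ)) := if Even τ.length then idText L (τ.length / 2) else D τ
  let T := genText next
  have hTL (i : ℕ) : ∀ x ∈ T i, x ∈ L := by
    simp only [T, genText, next]
    split_ifs
    exacts [fun x hx => idText_mem hx, hDL _]
  have hcontent : content T = L := by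
    refine Set.Subset.antisymm (fun x ⟨i, hi⟩ => hTL i x hi) fun x hx => ⟨2 * x, ?_⟩
    simp [T, genText, next, length_genSeg, idText_self hx]
  obtain ⟨n, hn⟩ := hconv T hcontent
  have hseg (i : ℕ) : run g s₀ T i = (genSeg next i).foldl g s₀ := by rw [run, initSeg_genText]
  refine hDmove (genSeg next (2 * n + 1)) (fun d hd => ?_) ?_
  · rw [← initSeg_genText] at hd
    obtain ⟨i, -, rfl⟩ := List.mem_map.1 hd
    exact hTL i
  · have h₁ := hn (2 * n + 2) (by omega)
    have h₂ := hn (2 * n + 1) (by omega)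
    rw [run_succ, ← h₂] at h₁
    simpa [hseg, T, genText, next, length_genSeg, Nat.not_even_two_mul_add_one] using h₁

/-- Kleene's recursion theorem for C-indices. -/
lemma exists_cIndex_cset_iff {p : ℕ → ℕ → Bool} (hp : Computable₂ p) :
    ∃ e, CIndex e ∧ ∀ x, x ∈ Cset e ↔ p e x = true := by
  have hf : Computable₂ fun (c : Code) (x : ℕ) => bif p (encode c) x then 1 else 0 :=
    Computable.cond (hp.comp (Computable.encode.comp .fst) .snd) (.const 1) (.const 0)
  obtain ⟨c, hc⟩ := Code.fixed_point₂ hf.partrec₂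
  have hphi (x : ℕ) : phi (encode c) x = Part.some (bif p (encode c) x then 1 else 0) := by
    rw [phi_encode, hc]
    rfl
  refine ⟨encode c, fun x => ?_, fun x => ?_⟩ <;> cases hpx : p (encode c) x <;>
    simp [Cset, hphi, hpx]

/-- The learner's hypotheses: `none` stands for `∅`, `inl c` for `C_c`, `inr (c, z)` for
`C_c ∪ {z}`. -/
abbrev Hyp := Option (ℕ ⊕ ℕ × ℕ)

def hypFn : Hyp → ℕ →. ℕ
  | none, _ => Part.some 0
  | some (.inl c), x => phi c x
  | some (.inr (c, z)), x => (phi c x).map fun v => if x = z then 1 else v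

lemma hypFn_partrec : Partrec₂ hypFn := by
  have hinl : Partrec₂ fun (a : Hyp × ℕ) (c : ℕ) => phi c a.2 :=
    phi_partrec.comp .snd (Computable.snd.comp .fst)
  have hinr : Partrec₂ fun (a : Hyp × ℕ) (p : ℕ × ℕ) =>
      (phi p.1 a.2).map fun v => if a.2 = p.2 then 1 else v := by
    have hif : Primrec₂ fun (b : (Hyp × ℕ) × ℕ × ℕ) (v : ℕ) => if b.1.2 = b.2.2 then 1 else v :=
      Primrec.ite (Primrec.eq.comp (Primrec.snd.comp (Primrec.fst.comp .fst))
        (Primrec.snd.comp (Primrec.snd.comp .fst))) (.const 1) .snd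
    exact (phi_partrec.comp (Computable.fst.comp .snd)
      (Computable.snd.comp .fst)).map hif.to_comp
  have hsome : Partrec₂ fun (a : Hyp × ℕ) (t : ℕ ⊕ ℕ × ℕ) =>
      Sum.casesOn (motive := fun _ => Part ℕ) t (fun c => phi c a.2)
        fun p => (phi p.1 a.2).map fun v => if a.2 = p.2 then 1 else v :=
    Partrec.sumCasesOn .snd (hinl.comp (Computable.fst.comp .fst) .snd).to₂
      (hinr.comp (Computable.fst.comp .fst) .snd).to₂
  refine (Partrec.optionCasesOn_right .fst (.const 0) hsome).of_eq ?_
  rintro ⟨_ | _ | _, x⟩ <;> rfl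

lemma exists_code_hypFn : ∃ c : Code, c.eval = Nat.unpaired fun t x => hypFn (ofNat Hyp t) x :=
  Code.exists_code.1 (Partrec₂.unpaired'.2
    (hypFn_partrec.comp ((Computable.ofNat Hyp).comp .fst) .snd).to₂)

noncomputable def hypInterp : Code := exists_code_hypFn.choose

noncomputable def hypCode (s : Hyp) : ℕ := encode (hypInterp.curry (encode s))

lemma phi_hypCode (s : Hyp) : phi (hypCode s) = hypFn s := by
  funext x
  rw [hypCode, phi_encode, Code.eval_curry, hypInterp, exists_code_hypFn.choose_spec]
  simp

lemma hypCode_injective : Function.Injective hypCode := fun _ _ h =>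
  encode_injective (Code.curry_inj (encode_injective h)).2

lemma hypCode_primrec : Primrec hypCode :=
  Primrec.encode.comp (Code.primrec₂_curry.comp (.const _) .encode)

lemma cIndex_hypCode_none : CIndex (hypCode none) := fun _ => by
  simp [phi_hypCode, hypFn]

lemma cset_hypCode_none : Cset (hypCode none) = ∅ := by
  ext; simp [Cset, phi_hypCode, hypFn]

lemma cIndex_hypCode_inl {c : ℕ} (hc : CIndex c) : CIndex (hypCode (some (.inl c))) := by
  simpa [CIndex, phi_hypCode, hypFn] using hc

lemma cset_hypCode_inl (c : ℕ) : Cset (hypCode (some (.inl c))) = Cset c := by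
  simp [Cset, phi_hypCode, hypFn]

lemma cIndex_hypCode_inr {c : ℕ} (hc : CIndex c) (z : ℕ) :
    CIndex (hypCode (some (.inr (c, z)))) := fun x => by
  rcases hc x with h | h <;> simp only [phi_hypCode, hypFn, h, Part.map_some] <;> split_ifs <;> simp

lemma cset_hypCode_inr {c : ℕ} (hc : CIndex c) (z : ℕ) :
    Cset (hypCode (some (.inr (c, z)))) = Cset c ∪ {z} := by
  ext x
  rcases hc x with h | h <;> simp only [Cset, Set.mem_ofPred_eq, Set.mem_union,
    Set.mem_singleton_iff, phi_hypCode, hypFn, h, Part.map_some] <;>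
    split_ifs with hxz <;> simp [hxz]

noncomputable def decodeHyp (q : ℕ) : Part Hyp :=
  (Nat.rfind fun n => Part.some (hypCode (ofNat Hyp n) == q)).map (ofNat Hyp)

lemma decodeHyp_hypCode (s : Hyp) : decodeHyp (hypCode s) = Part.some s := by
  have hfind : encode s ∈ Nat.rfind fun n => Part.some (hypCode (ofNat Hyp n) == hypCode s) := by
    refine Nat.mem_rfind.2 ⟨by simp, fun {m} hm => ?_⟩
    have hne : ofNat Hyp m ≠ s := fun h => by rw [← h, encode_ofNat] at hm; exact lt_irrefl m hm
    simpa using fun h => hne (hypCode_injective h)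
  simp [decodeHyp, Part.eq_some_iff.2 hfind]

lemma decodeHyp_partrec : Partrec decodeHyp := by
  have hsearch : Primrec₂ fun (q n : ℕ) => hypCode (ofNat Hyp n) == q :=
    Primrec.beq.comp (hypCode_primrec.comp ((Primrec.ofNat Hyp).comp .snd)) .fst
  exact (Partrec.rfind hsearch.to_comp.partrec₂).map ((Computable.ofNat Hyp).comp .snd).to₂

/-- `b` records whether `x ∈ C_{x.1}`. -/
def nextHyp (s : Hyp) (x : ℕ) (b : Bool) : Hyp :=
  match s with
  | some (.inr p) => some (.inr p)
  | _ => bif b then some (.inl x.unpair.1) else some (.inr (x.unpair.1, x))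

lemma nextHyp_primrec : Primrec fun a : Hyp × ℕ × Bool => nextHyp a.1 a.2.1 a.2.2 := by
  have hfresh : Primrec fun a : Hyp × ℕ × Bool =>
      cond a.2.2 (some (.inl a.2.1.unpair.1) : Hyp) (some (.inr (a.2.1.unpair.1, a.2.1))) :=
    Primrec.cond (Primrec.snd.comp .snd)
      (Primrec.option_some.comp (Primrec.sumInl.comp
        (Primrec.fst.comp (Primrec.unpair.comp (Primrec.fst.comp .snd)))))
      (Primrec.option_some.comp (Primrec.sumInr.comp (Primrec.pair
        (Primrec.fst.comp (Primrec.unpair.comp (Primrec.fst.comp .snd)))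
        (Primrec.fst.comp .snd))))
  have hsome : Primrec₂ fun (a : Hyp × ℕ × Bool) (t : ℕ ⊕ ℕ × ℕ) =>
      Sum.casesOn (motive := fun _ => Hyp) t
        (fun _ => cond a.2.2 (some (.inl a.2.1.unpair.1) : Hyp)
          (some (.inr (a.2.1.unpair.1, a.2.1))))
        fun p => some (.inr p) :=
    Primrec.sumCasesOn .snd (hfresh.comp (Primrec.fst.comp .fst)).to₂
      (Primrec.option_some.comp (Primrec.sumInr.comp .snd)).to₂
  refine (Primrec.option_casesOn .fst hfresh hsome).of_eq ?_
  rintro ⟨_ | _ | _, _, _⟩ <;> rfl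

noncomputable def dataStep (q x : ℕ) : Part ℕ :=
  (decodeHyp q).bind fun s => (phi x.unpair.1 x).map fun v => hypCode (nextHyp s x (v == 1))

lemma dataStep_partrec : Partrec₂ dataStep := by
  have hread : Partrec₂ fun (a : ℕ × ℕ) (_ : Hyp) => phi a.2.unpair.1 a.2 :=
    phi_partrec.comp (Computable.fst.comp (Computable.unpair.comp (Computable.snd.comp .fst)))
      (Computable.snd.comp .fst)
  have hnext : Computable₂ fun (b : (ℕ × ℕ) × Hyp) (v : ℕ) =>
      hypCode (nextHyp b.2 b.1.2 (v == 1)) :=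
    (hypCode_primrec.comp (nextHyp_primrec.comp (Primrec.pair (Primrec.snd.comp .fst)
      (Primrec.pair (Primrec.snd.comp (Primrec.fst.comp .fst))
        (Primrec.beq.comp .snd (.const 1)))))).to_comp
  exact (decodeHyp_partrec.comp .fst).bind (hread.map hnext)

noncomputable def tagLearnerFn : Option (ℕ × Option ℕ) → Part ℕ
  | none => Part.some (hypCode none)
  | some (q, none) => Part.some q
  | some (q, some x) => dataStep q x

noncomputable def tagLearner : Learner := fun n => tagLearnerFn (ofNat _ n)

lemma tagLearner_encode (a : Option (ℕ × Option ℕ)) : tagLearner (encode a) = tagLearnerFn a := by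
  simp [tagLearner]

lemma tagLearner_partrec : PartComputable tagLearner := by
  have hsome : Partrec₂ fun (_ : Option (ℕ × Option ℕ)) (p : ℕ × Option ℕ) =>
      Option.casesOn (motive := fun _ => Part ℕ) p.2 (Part.some p.1) (dataStep p.1) :=
    Partrec.optionCasesOn_right (Computable.snd.comp .snd) (Computable.fst.comp .snd)
      (dataStep_partrec.comp (Computable.fst.comp (Computable.snd.comp .fst)) .snd).to₂
  have hfn : Partrec tagLearnerFn :=
    (Partrec.optionCasesOn_right .id (.const (hypCode none)) hsome).of_eq fun
      | none => rfl
      | some (_, none) => rfl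
      | some (_, some _) => rfl
  exact Partrec.nat_iff.1 (hfn.comp (Computable.ofNat _))

def taggedClass : Set (Set ℕ) :=
  {L | ∃ c, CIndex c ∧ (∀ x ∈ L, x.unpair.1 = c) ∧ (L = Cset c ∨ ∃ z ∉ Cset c, L = Cset c ∪ {z})}

lemma isRecClass_taggedClass : IsRecClass taggedClass := by
  rintro L ⟨c, hc, -, rfl | ⟨z, -, rfl⟩⟩
  · exact recLang_cset hc
  · rw [← cset_hypCode_inr hc z]
    exact recLang_cset (cIndex_hypCode_inr hc z)

open Classical in
noncomputable def hypStep (s : Hyp) : Option ℕ → Hyp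
  | none => s
  | some x => nextHyp s x (decide (x ∈ Cset x.unpair.1))

lemma tagLearner_step {s : Hyp} {d : Option ℕ} (hd : ∀ x ∈ d, CIndex x.unpair.1) :
    tagLearner (encode (some (hypCode s, d))) = Part.some (hypCode (hypStep s d)) := by
  rw [tagLearner_encode]
  rcases d with _ | x
  · rfl
  · rcases hd x rfl x with h | h <;>
      simp [tagLearnerFn, dataStep, decodeHyp_hypCode, hypStep, Cset, h]

def Reachable (c : ℕ) (L : Set ℕ) (s : Hyp) : Prop :=
  s = none ∨ s = some (.inl c) ∨ ∃ z ∈ L, z ∉ Cset c ∧ s = some (.inr (c, z))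

lemma reachable_hypStep {c : ℕ} {L : Set ℕ} {s : Hyp} (hs : Reachable c L s)
    (htag : ∀ x ∈ L, x.unpair.1 = c) {d : Option ℕ} (hd : ∀ x ∈ d, x ∈ L) :
    Reachable c L (hypStep s d) := by
  rcases d with _ | x
  · exact hs
  have hx : x ∈ L := hd x rfl
  have hfresh : Reachable c L (hypStep none (some x)) := by
    by_cases hxc : x ∈ Cset c <;> simp [Reachable, hypStep, nextHyp, htag x hx, hxc, hx]
  rcases hs with rfl | rfl | ⟨z, hzL, hzc, rfl⟩
  · exact hfresh
  · simpa [hypStep, nextHyp] using hfresh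
  · exact Or.inr (Or.inr ⟨z, hzL, hzc, rfl⟩)

lemma cIndex_hypCode_of_reachable {c : ℕ} {L : Set ℕ} {s : Hyp} (hc : CIndex c)
    (hs : Reachable c L s) : CIndex (hypCode s) := by
  rcases hs with rfl | rfl | ⟨z, -, -, rfl⟩
  exacts [cIndex_hypCode_none, cIndex_hypCode_inl hc, cIndex_hypCode_inr hc z]

lemma reachable_run {c : ℕ} {T : Text} (htag : ∀ x ∈ content T, x.unpair.1 = c) (i : ℕ) :
    Reachable c (content T) (run hypStep none T i) := by
  induction i with
  | zero => exact Or.inl rfl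
  | succ i ih => rw [run_succ]; exact reachable_hypStep ih htag fun x hx => ⟨i, hx⟩

lemma hypStep_inr (p : ℕ × ℕ) (d : Option ℕ) : hypStep (some (.inr p)) d = some (.inr p) := by
  cases d <;> rfl

lemma hypStep_of_mem {c : ℕ} {s : Hyp} (hs : s = none ∨ s = some (.inl c)) {x : ℕ}
    (hxc : x.unpair.1 = c) (hx : x ∈ Cset c) : hypStep s (some x) = some (.inl c) := by
  subst hxc
  rcases hs with rfl | rfl <;> simp [hypStep, nextHyp, hx]

lemma hypStep_of_notMem {c : ℕ} {s : Hyp} (hs : s = none ∨ s = some (.inl c)) {x : ℕ}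
    (hxc : x.unpair.1 = c) (hx : x ∉ Cset c) : hypStep s (some x) = some (.inr (c, x)) := by
  subst hxc
  rcases hs with rfl | rfl <;> simp [hypStep, nextHyp, hx]

lemma exists_run_hypStep_eq {c : ℕ} {T : Text} (hc : CIndex c)
    (htag : ∀ x ∈ content T, x.unpair.1 = c)
    (hT : content T = Cset c ∨ ∃ z ∉ Cset c, content T = Cset c ∪ {z}) :
    ∃ n s, Cset (hypCode s) = content T ∧ ∀ m, n ≤ m → run hypStep none T m = s := by
  rcases hT with hT | ⟨z, hz, hT⟩
  · rcases Set.eq_empty_or_nonempty (content T) with hemp | ⟨x, n, hn⟩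
    · refine ⟨0, none, by rw [cset_hypCode_none, hemp], fun m hm => run_eq_of_absorbing rfl
        (fun i _ => ?_) hm⟩
      cases h : T i with
      | none => rfl
      | some x => exact absurd (hemp ▸ ⟨i, h⟩ : x ∈ (∅ : Set ℕ)) (Set.notMem_empty x)
    refine ⟨n + 1, some (.inl c), by rw [cset_hypCode_inl, hT], fun m hm =>
      run_eq_of_absorbing ?_ (fun i _ => ?_) hm⟩
    · have hunlocked : run hypStep none T n = none ∨ run hypStep none T n = some (.inl c) := by
        rcases reachable_run htag n with h | h | ⟨z, hzT, hzc, -⟩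
        exacts [Or.inl h, Or.inr h, absurd (hT ▸ hzT) hzc]
      rw [run_succ, hn, hypStep_of_mem hunlocked (htag x ⟨n, hn⟩) (hT ▸ ⟨n, hn⟩)]
    · cases h : T i with
      | none => rfl
      | some y => exact hypStep_of_mem (Or.inr rfl) (htag y ⟨i, h⟩) (hT ▸ ⟨i, h⟩)
  · obtain ⟨n, hn⟩ : z ∈ content T := hT ▸ Or.inr rfl
    refine ⟨n + 1, some (.inr (c, z)), by rw [cset_hypCode_inr hc, hT], fun m hm =>
      run_eq_of_absorbing ?_ (fun i _ => hypStep_inr _ _) hm⟩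
    rw [run_succ, hn]
    rcases reachable_run htag n with h | h | ⟨z', hz'T, hz'c, h⟩
    · exact hypStep_of_notMem (Or.inl h) (htag z ⟨n, hn⟩) hz
    · exact hypStep_of_notMem (Or.inr h) (htag z ⟨n, hn⟩) hz
    · have : z' = z := by
        rw [hT] at hz'T
        exact hz'T.resolve_left hz'c
      rw [h, this, hypStep_inr]

lemma tagLearner_learns : ∀ L ∈ taggedClass, Learns Itop (andRes CIndRes ExC) tagLearner L := by
  rintro L ⟨c, hc, htag, hL⟩ T rfl
  have hitop (i : ℕ) : Itop tagLearner T i = Part.some (hypCode (run hypStep none T i)) :=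
    itop_eq_run hypCode (tagLearner_encode none) (fun i _ =>
      tagLearner_step fun x hx => htag x ⟨i, hx⟩ ▸ hc) i
  refine ⟨fun i e he => ?_, ?_⟩
  · rw [hitop, Part.some_inj] at he
    exact he ▸ cIndex_hypCode_of_reachable hc (reachable_run htag i)
  · obtain ⟨n, s, hcset, hrun⟩ := exists_run_hypStep_eq hc htag hL
    refine ExC.of_eventually_eq (fun m hm => by rw [hitop, hrun m hm]) ?_ hcset
    exact hrun n le_rfl ▸ cIndex_hypCode_of_reachable hc (reachable_run htag n)

section TotalLearner

variable {h : Learner} (htot : ∀ x, (h x).Dom)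

noncomputable def totalStep (q : ℕ) (d : Option ℕ) : ℕ :=
  (h (encode (some (q, d)))).get (htot _)

noncomputable def totalInit : ℕ := (h (encode (none : Option (ℕ × Option ℕ)))).get (htot _)

lemma itop_eq_run_totalStep (T : Text) (i : ℕ) :
    Itop h T i = Part.some (run (totalStep htot) (totalInit htot) T i) :=
  itop_eq_run id (Part.some_get _).symm (fun _ _ => (Part.some_get _).symm) i

lemma totalStep_computable (hpc : Nat.Partrec h) : Computable₂ (totalStep htot) :=
  ((Partrec.nat_iff.2 hpc).comp (Computable.encode.comp
    (Computable.option_some.comp (Computable.pair .fst .snd)))).of_eq_tot fun _ => Part.get_mem _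

lemma run_totalStep_converges {L : Set ℕ} (hL : Learns Itop (andRes CIndRes ExC) h L)
    (T : Text) (hT : content T = L) : ∃ n, ∀ m, n ≤ m →
      run (totalStep htot) (totalInit htot) T m = run (totalStep htot) (totalInit htot) T n := by
  obtain ⟨n, hconst, -⟩ := (hL T hT).2
  refine ⟨n, fun m hm => ?_⟩
  simpa [itop_eq_run_totalStep htot] using hconst m hm

lemma cset_foldl_totalStep_eq {L : Set ℕ} (hL : Learns Itop (andRes CIndRes ExC) h L)
    {τ : List (Option ℕ)} (hτ : ∀ d ∈ τ, ∀ x ∈ d, x ∈ L)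
    (hlock : ∀ d : Option ℕ, (∀ x ∈ d, x ∈ L) →
      totalStep htot (τ.foldl (totalStep htot) (totalInit htot)) d =
        τ.foldl (totalStep htot) (totalInit htot)) :
    Cset (τ.foldl (totalStep htot) (totalInit htot)) = L := by
  have hT := content_prepend_idText hτ
  have hrun : run (totalStep htot) (totalInit htot) (prepend τ (idText L)) τ.length =
      τ.foldl (totalStep htot) (totalInit htot) := by
    rw [run, initSeg_prepend]
  refine hT ▸ (hL _ hT).2.cset_eq_of_eventually_eq (n := τ.length) fun m hm => ?_
  rw [itop_eq_run_totalStep htot, run_eq_of_absorbing hrun (fun i hi => ?_) hm]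
  rw [prepend_of_le _ hi]
  exact hlock _ fun x hx => idText_mem hx

end TotalLearner

lemma exists_cset_iff_moves {g : ℕ → Option ℕ → ℕ} (hg : Computable₂ g) :
    ∃ e, CIndex e ∧ ∀ x, x ∈ Cset e ↔
      x.unpair.1 = e ∧ g x.unpair.2.unpair.1 (some x) ≠ x.unpair.2.unpair.1 := by
  have hx1 : Computable fun a : ℕ × ℕ => a.2.unpair.1 :=
    Computable.fst.comp (Computable.unpair.comp .snd)
  have hq : Computable fun a : ℕ × ℕ => a.2.unpair.2.unpair.1 :=
    Computable.fst.comp (Computable.unpair.comp (Computable.snd.comp (Computable.unpair.comp .snd)))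
  have hp : Computable₂ fun (e x : ℕ) =>
      (x.unpair.1 == e && !(g x.unpair.2.unpair.1 (some x) == x.unpair.2.unpair.1)) :=
    Primrec.and.to_comp.comp (Primrec.beq.to_comp.comp hx1 .fst)
      (Primrec.not.to_comp.comp (Primrec.beq.to_comp.comp
        (hg.comp hq (Computable.option_some.comp .snd)) hq))
  simpa only [Bool.and_eq_true, beq_iff_eq, Bool.not_eq_true', beq_eq_false_iff_ne] using
    exists_cIndex_cset_iff hp

lemma taggedClass_not_mem_total :
    taggedClass ∉ LearnableREC TotalComputable Itop (andRes CIndRes ExC) := by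
  rintro ⟨-, h, ⟨hpc, htot⟩, hlearn⟩
  let g := totalStep htot
  obtain ⟨e, he, hmem⟩ := exists_cset_iff_moves (totalStep_computable htot hpc)
  have hLe : Cset e ∈ taggedClass := ⟨e, he, fun x hx => ((hmem x).1 hx).1, Or.inl rfl⟩
  obtain ⟨τ, hτ, hlock⟩ := exists_locking_seq (run_totalStep_converges htot (hlearn _ hLe))
  set q := τ.foldl g (totalInit htot) with hq
  have hstay (j : ℕ) : g q (some (Nat.pair e (Nat.pair q j))) = q := by
    by_contra hne
    refine hne (hlock _ fun x hx => ?_)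
    cases Option.some_inj.1 hx
    exact (hmem _).2 ⟨by simp, by simpa using hne⟩
  set z := Nat.pair e (Nat.pair q 0)
  have hz : z ∉ Cset e := fun hz => ((hmem z).1 hz).2 (by simpa [z] using hstay 0)
  have hLz : Cset e ∪ {z} ∈ taggedClass := by
    refine ⟨e, he, ?_, Or.inr ⟨z, hz, rfl⟩⟩
    rintro x (hx | rfl)
    exacts [((hmem x).1 hx).1, by simp [z]]
  have hqe : Cset q = Cset e := cset_foldl_totalStep_eq htot (hlearn _ hLe) hτ hlock
  have hqz : Cset q = Cset e ∪ {z} := by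
    have hfold : (τ ++ [some z]).foldl g (totalInit htot) = q := by
      rw [List.foldl_append, ← hq]
      exact hstay 0
    rw [← hfold]
    refine cset_foldl_totalStep_eq htot (hlearn _ hLz) (fun d hd x hx => ?_) fun d hd => ?_
    · rcases List.mem_append.1 hd with hd | hd
      · exact Or.inl (hτ d hd x hx)
      · cases (List.mem_singleton.1 hd).symm.trans hx
        exact Or.inr rfl
    · rw [hfold]
      cases d with
      | none => exact hlock none (by simp)
      | some x =>
        rcases hd x rfl with hx | rfl
        · exact hlock _ fun y hy => Option.some_inj.1 hy ▸ hx
        · exact hstay 0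
  exact hz (hqe ▸ hqz ▸ Or.inr rfl)

lemma taggedClass_mem_partial :
    taggedClass ∈ LearnableREC PartComputable Itop (andRes CIndRes ExC) :=
  ⟨isRecClass_taggedClass, tagLearner, tagLearner_partrec, tagLearner_learns⟩

/-- `[ℛTxtItCIndEx_C]_REC ⊊ [TxtItCIndEx_C]_REC`. -/
theorem total_it_cind_ssubset :
    LearnableREC TotalComputable Itop (andRes CIndRes ExC) ⊂
      LearnableREC PartComputable Itop (andRes CIndRes ExC) :=
  ⟨fun _ ⟨hrec, h, ⟨hpc, _⟩, hlearn⟩ => ⟨hrec, h, hpc, hlearn⟩,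
    fun hsub => taggedClass_not_mem_total (hsub taggedClass_mem_partial)⟩

end InductiveInference
end
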